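/- At every point (0,w) of the Cartan–Hartogs domain M_Ω(μ), the fourth-order Wirtinger derivatives of the potential Φ satisfy: [g(μ)_{ij̄kl̄}]_{z=0} = [g^{Ω(μ)}_{ij̄kl̄}]_{z=0}/(1 − |w|²) + |w|² [(N^μ)_{il̄}(N^μ)_{kj̄} + (N^μ)_{ij̄}(N^μ)_{kl̄}]_{z=0}/(1 − |w|²)² for 1 ≤ i,j,k,l ≤ d; [g(μ)_{wj̄kl̄}]_{z=0} = −w̄ [(N^μ)_{kl̄j̄}]_{z=0}/(1 − |w|²)²; [g(μ)_{ww̄kl̄}]_{z=0} = −(1 + |w|²)[(N^μ)_{kl̄}]_{z=0}/(1 − |w|²)³; [g(μ)_{jw̄ww̄}]_{z=0} = [g(μ)_{wj̄ww̄}]_{z=0} = 0; and [g(μ)_{ww̄ww̄}]_{z=0} = (2 + 4|w|²)/(1 − |w|²)⁴. -/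

import Mathlib

open Complex Matrix
open scoped ComplexOrder

noncomputable section

/-- Wirtinger derivative `∂f/∂z_j` of a function `f : ℂ^n → ℂ`. -/
def wD {n : ℕ} (j : Fin n) (f : (Fin n → ℂ) → ℂ) : (Fin n → ℂ) → ℂ :=
  fun p => (1 / 2 : ℂ) *
    (fderiv ℝ f p (Pi.single j 1) - Complex.I * fderiv ℝ f p (Pi.single j Complex.I))

/-- Conjugate Wirtinger derivative `∂f/∂z̄_j` of a function `f : ℂ^n → ℂ`. -/
def wDbar {n : ℕ} (j : Fin n) (f : (Fin n → ℂ) → ℂ) : (Fin n → ℂ) → ℂ :=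
  fun p => (1 / 2 : ℂ) *
    (fderiv ℝ f p (Pi.single j 1) + Complex.I * fderiv ℝ f p (Pi.single j Complex.I))

variable (d : ℕ) (μ : ℝ) (N : (Fin d → ℂ) → ℝ)

/-- `N^μ` as a complex-valued function on `ℂ^d`. -/
def NmuC : (Fin d → ℂ) → ℂ := fun z => ((N z ^ μ : ℝ) : ℂ)

/-- The Kähler potential `Φ(z,w) = -log(N(z)^μ - |w|²)` of the Cartan–Hartogs domain,
identifying `(z,w)` with the point `p : ℂ^{d+1}`, `z = p ∘ castSucc`, `w = p (last)`. -/
def CHpot : (Fin (d + 1) → ℂ) → ℂ :=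
  fun p =>
    -(((Real.log (N (fun j => p j.castSucc) ^ μ - ‖p (Fin.last d)‖ ^ 2)) : ℂ))

/-- The component `g(μ)_{αβ̄} = ∂²Φ/∂z_α∂z̄_β` of the Cartan--Hartogs metric. -/
def gCH (α β : Fin (d + 1)) : (Fin (d + 1) → ℂ) → ℂ := wD α (wDbar β (CHpot d μ N))

/-- The matrix of the Cartan--Hartogs metric `g(μ)` at a point `p`. -/
def gCHmat (p : Fin (d + 1) → ℂ) : Matrix (Fin (d + 1)) (Fin (d + 1)) ℂ :=
  Matrix.of fun α β => gCH d μ N α β p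

/-- The component `g^{Ω(μ)}_{jk̄} = -∂² log N^μ/∂z_j∂z̄_k`. -/
def gOm (j k : Fin d) : (Fin d → ℂ) → ℂ :=
  fun z => -(wD j (wDbar k fun y => ((Real.log (N y ^ μ) : ℝ) : ℂ)) z)

/-- The matrix of the metric `g^{Ω(μ)}` at a point `z ∈ Ω`. -/
def gOmMat (z : Fin d → ℂ) : Matrix (Fin d) (Fin d) ℂ :=
  Matrix.of fun j k => gOm d μ N j k z

/-- The Ricci tensor `Ric_{αβ̄} = -∂² log det(g(μ))/∂z_α∂z̄_β` of `g(μ)`. -/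
def RicCH (α β : Fin (d + 1)) : (Fin (d + 1) → ℂ) → ℂ :=
  fun p => -(wD α (wDbar β fun q => Complex.log ((gCHmat d μ N q).det)) p)

/-- The scalar curvature `κ_{g(μ)} = Σ_{α,β} g(μ)^{βᾱ} Ric_{αβ̄}` of `g(μ)`. -/
def scalCH : (Fin (d + 1) → ℂ) → ℂ :=
  fun p => ∑ α : Fin (d + 1), ∑ β : Fin (d + 1),
    (gCHmat d μ N p)⁻¹ β α * RicCH d μ N α β p

/-- The curvature tensor
`R_{αβ̄ητ̄} = -g(μ)_{αβ̄ητ̄} + Σ_{ζ,θ} g(μ)^{ζθ̄} g(μ)_{αζ̄η} g(μ)_{θτ̄β̄}` of `g(μ)`. -/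
def Rcurv (α β η τ : Fin (d + 1)) : (Fin (d + 1) → ℂ) → ℂ :=
  fun p => -(wDbar τ (wD η (gCH d μ N α β)) p) +
    ∑ ζ : Fin (d + 1), ∑ θ : Fin (d + 1),
      (gCHmat d μ N p)⁻¹ ζ θ * wD η (gCH d μ N α ζ) p * wDbar β (gCH d μ N θ τ) p

/-- The squared norm `|R|²` of the curvature tensor of `g(μ)`. -/
def Rnorm2 : (Fin (d + 1) → ℂ) → ℂ :=
  fun p => ∑ α : Fin (d+1), ∑ β : Fin (d+1), ∑ η : Fin (d+1), ∑ θ : Fin (d+1),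
    ∑ ζ : Fin (d+1), ∑ ν : Fin (d+1), ∑ ξ : Fin (d+1), ∑ τ : Fin (d+1),
      (starRingEnd ℂ) ((gCHmat d μ N p)⁻¹ α ζ) * (gCHmat d μ N p)⁻¹ β ν *
      (starRingEnd ℂ) ((gCHmat d μ N p)⁻¹ η ξ) * (gCHmat d μ N p)⁻¹ θ τ *
      Rcurv d μ N α β η θ p * (starRingEnd ℂ) (Rcurv d μ N ζ ν ξ τ p)

/-- The squared norm `|Ric|²` of the Ricci tensor of `g(μ)`. -/
def RicNorm2 : (Fin (d + 1) → ℂ) → ℂ :=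
  fun p => ∑ α : Fin (d+1), ∑ β : Fin (d+1), ∑ η : Fin (d+1), ∑ τ : Fin (d+1),
    (starRingEnd ℂ) ((gCHmat d μ N p)⁻¹ η τ) * (gCHmat d μ N p)⁻¹ α β *
    RicCH d μ N η α p * (starRingEnd ℂ) (RicCH d μ N τ β p)

/-- The Laplacian `Δκ_{g(μ)} = Σ_{α,β} g(μ)^{αβ̄} ∂²κ_{g(μ)}/∂z_α∂z̄_β`. -/
def lapScalCH : (Fin (d + 1) → ℂ) → ℂ :=
  fun p => ∑ α : Fin (d+1), ∑ β : Fin (d+1),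
    (gCHmat d μ N p)⁻¹ α β * wDbar β (wD α (scalCH d μ N)) p

/-- The Ricci tensor of `g^{Ω(μ)}`. -/
def RicOm (j k : Fin d) : (Fin d → ℂ) → ℂ :=
  fun z => -(wD j (wDbar k fun y => Complex.log ((gOmMat d μ N y).det)) z)

/-- The scalar curvature `κ_{g^{Ω(μ)}}` of `g^{Ω(μ)}`. -/
def scalOm : (Fin d → ℂ) → ℂ :=
  fun z => ∑ j : Fin d, ∑ k : Fin d, (gOmMat d μ N z)⁻¹ k j * RicOm d μ N j k z

/-- The curvature tensor of `g^{Ω(μ)}`. -/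
def RcurvOm (i j k l : Fin d) : (Fin d → ℂ) → ℂ :=
  fun z => -(wDbar l (wD k (gOm d μ N i j)) z) +
    ∑ p : Fin d, ∑ q : Fin d,
      (gOmMat d μ N z)⁻¹ p q * wD k (gOm d μ N i p) z * wDbar j (gOm d μ N q l) z

/-- The squared norm `|R_{g^{Ω(μ)}}|²` of the curvature tensor of `g^{Ω(μ)}`. -/
def Rnorm2Om : (Fin d → ℂ) → ℂ :=
  fun z => ∑ α : Fin d, ∑ β : Fin d, ∑ η : Fin d, ∑ θ : Fin d,
    ∑ ζ : Fin d, ∑ ν : Fin d, ∑ ξ : Fin d, ∑ τ : Fin d,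
      (starRingEnd ℂ) ((gOmMat d μ N z)⁻¹ α ζ) * (gOmMat d μ N z)⁻¹ β ν *
      (starRingEnd ℂ) ((gOmMat d μ N z)⁻¹ η ξ) * (gOmMat d μ N z)⁻¹ θ τ *
      RcurvOm d μ N α β η θ z * (starRingEnd ℂ) (RcurvOm d μ N ζ ν ξ τ z)

end

/-! ### Auxiliary toolbox for Wirtinger derivatives -/

noncomputable section AuxTools
open Complex

variable {n : ℕ} {f g : (Fin n → ℂ) → ℂ} {p : Fin n → ℂ} {j k : Fin n}

lemma wD_congr (h : f =ᶠ[nhds p] g) (j : Fin n) : wD j f p = wD j g p := by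
  simp only [wD, h.fderiv_eq]

lemma wDbar_congr (h : f =ᶠ[nhds p] g) (j : Fin n) : wDbar j f p = wDbar j g p := by
  simp only [wDbar, h.fderiv_eq]

lemma eventuallyEq_of_isOpen {U : Set (Fin n → ℂ)} (hU : IsOpen U) (hq : p ∈ U)
    (h : ∀ x ∈ U, f x = g x) : f =ᶠ[nhds p] g :=
  Filter.eventually_of_mem (hU.mem_nhds hq) h

lemma wD_of_hasFDerivAt {L : (Fin n → ℂ) →L[ℝ] ℂ} (h : HasFDerivAt f L p) (j : Fin n) :
    wD j f p = (1 / 2 : ℂ) * (L (Pi.single j 1) - Complex.I * L (Pi.single j Complex.I)) := by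
  simp only [wD, h.fderiv]

lemma wDbar_of_hasFDerivAt {L : (Fin n → ℂ) →L[ℝ] ℂ} (h : HasFDerivAt f L p) (j : Fin n) :
    wDbar j f p = (1 / 2 : ℂ) * (L (Pi.single j 1) + Complex.I * L (Pi.single j Complex.I)) := by
  simp only [wDbar, h.fderiv]

lemma wD_mul (hf : DifferentiableAt ℝ f p) (hg : DifferentiableAt ℝ g p) (j : Fin n) :
    wD j (fun q => f q * g q) p = wD j f p * g p + f p * wD j g p := by
  simp only [wD, fderiv_fun_mul hf hg, ContinuousLinearMap.add_apply,
    ContinuousLinearMap.smul_apply, smul_eq_mul]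
  ring

lemma wDbar_mul (hf : DifferentiableAt ℝ f p) (hg : DifferentiableAt ℝ g p) (j : Fin n) :
    wDbar j (fun q => f q * g q) p = wDbar j f p * g p + f p * wDbar j g p := by
  simp only [wDbar, fderiv_fun_mul hf hg, ContinuousLinearMap.add_apply,
    ContinuousLinearMap.smul_apply, smul_eq_mul]
  ring

lemma wD_neg (j : Fin n) : wD j (fun q => -(f q)) p = -(wD j f p) := by
  simp only [wD, fderiv_fun_neg, ContinuousLinearMap.neg_apply]
  ring

lemma wDbar_neg (j : Fin n) : wDbar j (fun q => -(f q)) p = -(wDbar j f p) := by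
  simp only [wDbar, fderiv_fun_neg, ContinuousLinearMap.neg_apply]
  ring

lemma wD_sub (hf : DifferentiableAt ℝ f p) (hg : DifferentiableAt ℝ g p) (j : Fin n) :
    wD j (fun q => f q - g q) p = wD j f p - wD j g p := by
  simp only [wD, fderiv_fun_sub hf hg, ContinuousLinearMap.sub_apply]
  ring

lemma wDbar_sub (hf : DifferentiableAt ℝ f p) (hg : DifferentiableAt ℝ g p) (j : Fin n) :
    wDbar j (fun q => f q - g q) p = wDbar j f p - wDbar j g p := by
  simp only [wDbar, fderiv_fun_sub hf hg, ContinuousLinearMap.sub_apply]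
  ring

lemma wD_add (hf : DifferentiableAt ℝ f p) (hg : DifferentiableAt ℝ g p) (j : Fin n) :
    wD j (fun q => f q + g q) p = wD j f p + wD j g p := by
  simp only [wD, fderiv_fun_add hf hg, ContinuousLinearMap.add_apply]
  ring

lemma wDbar_add (hf : DifferentiableAt ℝ f p) (hg : DifferentiableAt ℝ g p) (j : Fin n) :
    wDbar j (fun q => f q + g q) p = wDbar j f p + wDbar j g p := by
  simp only [wDbar, fderiv_fun_add hf hg, ContinuousLinearMap.add_apply]
  ring

lemma wD_inv (hf : DifferentiableAt ℝ f p) (h0 : f p ≠ 0) (j : Fin n) :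
    wD j (fun q => (f q)⁻¹) p = -(wD j f p) * ((f p)⁻¹) ^ 2 := by
  have h := ((hasFDerivAt_inv' (𝕜 := ℝ) h0).comp p hf.hasFDerivAt).fderiv
  have hfun : (fun q => (f q)⁻¹) = Inv.inv ∘ f := rfl
  simp only [wD, hfun, h, ContinuousLinearMap.comp_apply, ContinuousLinearMap.neg_apply,
    ContinuousLinearMap.mulLeftRight_apply]
  field_simp
  ring

lemma wDbar_inv (hf : DifferentiableAt ℝ f p) (h0 : f p ≠ 0) (j : Fin n) :
    wDbar j (fun q => (f q)⁻¹) p = -(wDbar j f p) * ((f p)⁻¹) ^ 2 := by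
  have h := ((hasFDerivAt_inv' (𝕜 := ℝ) h0).comp p hf.hasFDerivAt).fderiv
  have hfun : (fun q => (f q)⁻¹) = Inv.inv ∘ f := rfl
  simp only [wDbar, hfun, h, ContinuousLinearMap.comp_apply, ContinuousLinearMap.neg_apply,
    ContinuousLinearMap.mulLeftRight_apply]
  field_simp
  ring

lemma wD_const (c : ℂ) (j : Fin n) : wD j (fun _ => c) p = 0 := by
  simp [wD, fderiv_const]

lemma wDbar_const (c : ℂ) (j : Fin n) : wDbar j (fun _ => c) p = 0 := by
  simp [wDbar, fderiv_const]

/-- coordinate projection as CLM -/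
def projC (k : Fin n) : (Fin n → ℂ) →L[ℝ] ℂ := ContinuousLinearMap.proj k

/-- conjugate coordinate as CLM -/
def projCbar (k : Fin n) : (Fin n → ℂ) →L[ℝ] ℂ :=
  (Complex.conjCLE.toContinuousLinearMap).comp (ContinuousLinearMap.proj k)

lemma wD_coord (j k : Fin n) (p : Fin n → ℂ) :
    wD j (fun q => q k) p = if k = j then 1 else 0 := by
  have h : fderiv ℝ (fun q : Fin n → ℂ => q k) p = projC k := (projC k).fderiv
  simp only [wD, h, projC, ContinuousLinearMap.proj_apply, Pi.single_apply]
  split_ifs with hkj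
  · norm_num [Complex.ext_iff]
  · simp

lemma wDbar_coord (j k : Fin n) (p : Fin n → ℂ) :
    wDbar j (fun q => q k) p = 0 := by
  have h : fderiv ℝ (fun q : Fin n → ℂ => q k) p = projC k := (projC k).fderiv
  simp only [wDbar, h, projC, ContinuousLinearMap.proj_apply, Pi.single_apply]
  split_ifs with hkj
  · norm_num [Complex.ext_iff]
  · simp

lemma wD_coord_conj (j k : Fin n) (p : Fin n → ℂ) :
    wD j (fun q => (starRingEnd ℂ) (q k)) p = 0 := by
  have h : fderiv ℝ (fun q : Fin n → ℂ => (starRingEnd ℂ) (q k)) p = projCbar k :=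
    (projCbar k).fderiv
  simp only [wD, h, projCbar, ContinuousLinearMap.comp_apply,
    ContinuousLinearEquiv.coe_coe, ContinuousLinearMap.proj_apply, Pi.single_apply]
  split_ifs with hkj
  · norm_num [Complex.conjCLE_apply, Complex.ext_iff]
  · simp [Complex.conjCLE_apply]

lemma wDbar_coord_conj (j k : Fin n) (p : Fin n → ℂ) :
    wDbar j (fun q => (starRingEnd ℂ) (q k)) p = if k = j then 1 else 0 := by
  have h : fderiv ℝ (fun q : Fin n → ℂ => (starRingEnd ℂ) (q k)) p = projCbar k :=
    (projCbar k).fderiv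
  simp only [wDbar, h, projCbar, ContinuousLinearMap.comp_apply,
    ContinuousLinearEquiv.coe_coe, ContinuousLinearMap.proj_apply, Pi.single_apply]
  split_ifs with hkj
  · norm_num [Complex.conjCLE_apply, Complex.ext_iff]
  · simp [Complex.conjCLE_apply]

lemma differentiableAt_coord (k : Fin n) : DifferentiableAt ℝ (fun q : Fin n → ℂ => q k) p :=
  (projC k).differentiableAt

lemma differentiableAt_coord_conj (k : Fin n) :
    DifferentiableAt ℝ (fun q : Fin n → ℂ => (starRingEnd ℂ) (q k)) p :=
  (projCbar k).differentiableAt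

end AuxTools

noncomputable section AuxTools2
open Complex

variable {d n : ℕ} {f g : (Fin n → ℂ) → ℂ} {p : Fin n → ℂ} {j k : Fin n}

/-- restriction to the first d coordinates, as a CLM -/
def iotaC (d : ℕ) : (Fin (d + 1) → ℂ) →L[ℝ] (Fin d → ℂ) :=
  ContinuousLinearMap.pi fun j => ContinuousLinearMap.proj j.castSucc

lemma iotaC_apply (q : Fin (d+1) → ℂ) (j : Fin d) : iotaC d q j = q j.castSucc := rfl

lemma iotaC_single_castSucc (j : Fin d) (c : ℂ) :
    iotaC d (Pi.single j.castSucc c) = Pi.single j c := by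
  funext k
  simp only [iotaC_apply, Pi.single_apply]
  by_cases h : k = j
  · subst h; simp
  · rw [if_neg (by simpa using h), if_neg h]

lemma iotaC_single_last (c : ℂ) : iotaC d (Pi.single (Fin.last d) c) = 0 := by
  funext k
  simp only [iotaC_apply, Pi.single_apply]
  rw [if_neg (Fin.castSucc_lt_last k).ne, Pi.zero_apply]

lemma wD_comp_iota (m : (Fin d → ℂ) → ℂ) (q : Fin (d+1) → ℂ)
    (hm : DifferentiableAt ℝ m (iotaC d q)) (j : Fin d) :
    wD j.castSucc (fun x => m (iotaC d x)) q = wD j m (iotaC d q) := by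
  have h : fderiv ℝ (fun x => m (iotaC d x)) q = (fderiv ℝ m (iotaC d q)).comp (iotaC d) := by
    rw [show (fun x => m (iotaC d x)) = m ∘ (iotaC d) from rfl,
      fderiv_comp q hm (iotaC d).differentiableAt, (iotaC d).fderiv]
  simp only [wD, h, ContinuousLinearMap.comp_apply, iotaC_single_castSucc]

lemma wDbar_comp_iota (m : (Fin d → ℂ) → ℂ) (q : Fin (d+1) → ℂ)
    (hm : DifferentiableAt ℝ m (iotaC d q)) (j : Fin d) :
    wDbar j.castSucc (fun x => m (iotaC d x)) q = wDbar j m (iotaC d q) := by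
  have h : fderiv ℝ (fun x => m (iotaC d x)) q = (fderiv ℝ m (iotaC d q)).comp (iotaC d) := by
    rw [show (fun x => m (iotaC d x)) = m ∘ (iotaC d) from rfl,
      fderiv_comp q hm (iotaC d).differentiableAt, (iotaC d).fderiv]
  simp only [wDbar, h, ContinuousLinearMap.comp_apply, iotaC_single_castSucc]

lemma wD_last_comp_iota (m : (Fin d → ℂ) → ℂ) (q : Fin (d+1) → ℂ)
    (hm : DifferentiableAt ℝ m (iotaC d q)) :
    wD (Fin.last d) (fun x => m (iotaC d x)) q = 0 := by
  have h : fderiv ℝ (fun x => m (iotaC d x)) q = (fderiv ℝ m (iotaC d q)).comp (iotaC d) := by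
    rw [show (fun x => m (iotaC d x)) = m ∘ (iotaC d) from rfl,
      fderiv_comp q hm (iotaC d).differentiableAt, (iotaC d).fderiv]
  simp only [wD, h, ContinuousLinearMap.comp_apply, iotaC_single_last, map_zero]
  ring

lemma wDbar_last_comp_iota (m : (Fin d → ℂ) → ℂ) (q : Fin (d+1) → ℂ)
    (hm : DifferentiableAt ℝ m (iotaC d q)) :
    wDbar (Fin.last d) (fun x => m (iotaC d x)) q = 0 := by
  have h : fderiv ℝ (fun x => m (iotaC d x)) q = (fderiv ℝ m (iotaC d q)).comp (iotaC d) := by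
    rw [show (fun x => m (iotaC d x)) = m ∘ (iotaC d) from rfl,
      fderiv_comp q hm (iotaC d).differentiableAt, (iotaC d).fderiv]
  simp only [wDbar, h, ContinuousLinearMap.comp_apply, iotaC_single_last, map_zero]
  ring

/-- smoothness of Wirtinger derivatives -/
lemma ContDiffAt.wD_smooth (hf : ContDiffAt ℝ (⊤ : ℕ∞) f p) (j : Fin n) :
    ContDiffAt ℝ (⊤ : ℕ∞) (wD j f) p := by
  have h1 : ContDiffAt ℝ (⊤ : ℕ∞) (fderiv ℝ f) p := hf.fderiv_right (by exact_mod_cast le_top)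
  have h2 : ∀ v : Fin n → ℂ, ContDiffAt ℝ (⊤ : ℕ∞) (fun q => fderiv ℝ f q v) p := fun v =>
    h1.clm_apply contDiffAt_const
  exact (contDiffAt_const.mul (((h2 (Pi.single j 1)).sub
    (contDiffAt_const.mul (h2 (Pi.single j Complex.I)))) : _))

lemma ContDiffAt.wDbar_smooth (hf : ContDiffAt ℝ (⊤ : ℕ∞) f p) (j : Fin n) :
    ContDiffAt ℝ (⊤ : ℕ∞) (wDbar j f) p := by
  have h1 : ContDiffAt ℝ (⊤ : ℕ∞) (fderiv ℝ f) p := hf.fderiv_right (by exact_mod_cast le_top)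
  have h2 : ∀ v : Fin n → ℂ, ContDiffAt ℝ (⊤ : ℕ∞) (fun q => fderiv ℝ f q v) p := fun v =>
    h1.clm_apply contDiffAt_const
  exact (contDiffAt_const.mul (((h2 (Pi.single j 1)).add
    (contDiffAt_const.mul (h2 (Pi.single j Complex.I)))) : _))

lemma wDbar_ofReal_log {h : (Fin n → ℂ) → ℝ} (hd : DifferentiableAt ℝ h p) (hp : h p ≠ 0)
    (j : Fin n) :
    wDbar j (fun q => ((Real.log (h q) : ℝ) : ℂ)) p
      = ((h p : ℂ))⁻¹ * wDbar j (fun q => ((h q : ℝ) : ℂ)) p := by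
  have hl : HasFDerivAt (fun q => Real.log (h q)) ((h p)⁻¹ • fderiv ℝ h p) p :=
    (Real.hasDerivAt_log hp).comp_hasFDerivAt p hd.hasFDerivAt
  have h1 : HasFDerivAt (fun q => ((Real.log (h q) : ℝ) : ℂ))
      (Complex.ofRealCLM.comp ((h p)⁻¹ • fderiv ℝ h p)) p :=
    Complex.ofRealCLM.hasFDerivAt.comp p hl
  have h2 : HasFDerivAt (fun q => ((h q : ℝ) : ℂ)) (Complex.ofRealCLM.comp (fderiv ℝ h p)) p :=
    Complex.ofRealCLM.hasFDerivAt.comp p hd.hasFDerivAt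
  rw [wDbar_of_hasFDerivAt h1 j, wDbar_of_hasFDerivAt h2 j]
  simp only [ContinuousLinearMap.comp_apply, ContinuousLinearMap.smul_apply,
    Complex.ofRealCLM_apply, smul_eq_mul, Complex.ofReal_mul, Complex.ofReal_inv]
  ring

lemma wD_ofReal_log {h : (Fin n → ℂ) → ℝ} (hd : DifferentiableAt ℝ h p) (hp : h p ≠ 0)
    (j : Fin n) :
    wD j (fun q => ((Real.log (h q) : ℝ) : ℂ)) p
      = ((h p : ℂ))⁻¹ * wD j (fun q => ((h q : ℝ) : ℂ)) p := by
  have hl : HasFDerivAt (fun q => Real.log (h q)) ((h p)⁻¹ • fderiv ℝ h p) p :=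
    (Real.hasDerivAt_log hp).comp_hasFDerivAt p hd.hasFDerivAt
  have h1 : HasFDerivAt (fun q => ((Real.log (h q) : ℝ) : ℂ))
      (Complex.ofRealCLM.comp ((h p)⁻¹ • fderiv ℝ h p)) p :=
    Complex.ofRealCLM.hasFDerivAt.comp p hl
  have h2 : HasFDerivAt (fun q => ((h q : ℝ) : ℂ)) (Complex.ofRealCLM.comp (fderiv ℝ h p)) p :=
    Complex.ofRealCLM.hasFDerivAt.comp p hd.hasFDerivAt
  rw [wD_of_hasFDerivAt h1 j, wD_of_hasFDerivAt h2 j]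
  simp only [ContinuousLinearMap.comp_apply, ContinuousLinearMap.smul_apply,
    Complex.ofRealCLM_apply, smul_eq_mul, Complex.ofReal_mul, Complex.ofReal_inv]
  ring

lemma hasFDerivAt_fderiv_apply (hf : ContDiffAt ℝ (⊤ : ℕ∞) f p) (u : Fin n → ℂ) :
    HasFDerivAt (fun q => fderiv ℝ f q u) ((fderiv ℝ (fderiv ℝ f) p).flip u) p := by
  have hd : DifferentiableAt ℝ (fderiv ℝ f) p :=
    (hf.fderiv_right (m := (⊤:ℕ∞)) (by exact_mod_cast (le_top : (⊤:ℕ∞) ≤ ⊤))).differentiableAt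
      (by simp)
  simpa using hd.hasFDerivAt.clm_apply (hasFDerivAt_const u p)

lemma wD_wDbar_comm (hf : ContDiffAt ℝ (⊤ : ℕ∞) f p) (j k : Fin n) :
    wD j (wDbar k f) p = wDbar k (wD j f) p := by
  have hsym : ∀ v w, fderiv ℝ (fderiv ℝ f) p v w = fderiv ℝ (fderiv ℝ f) p w v :=
    hf.isSymmSndFDerivAt (by simp only [minSmoothness_of_isRCLikeNormedField]; exact WithTop.coe_le_coe.mpr le_top)
  have hA := hasFDerivAt_fderiv_apply hf (Pi.single k (1:ℂ))
  have hB := hasFDerivAt_fderiv_apply hf (Pi.single k Complex.I)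
  have hg : HasFDerivAt (wDbar k f)
      ((1/2 : ℂ) • (((fderiv ℝ (fderiv ℝ f) p).flip (Pi.single k 1)) +
        Complex.I • ((fderiv ℝ (fderiv ℝ f) p).flip (Pi.single k Complex.I)))) p :=
    ((hA.add (hB.const_mul Complex.I)).const_mul (1/2 : ℂ))
  have hA' := hasFDerivAt_fderiv_apply hf (Pi.single j (1:ℂ))
  have hB' := hasFDerivAt_fderiv_apply hf (Pi.single j Complex.I)
  have hg' : HasFDerivAt (wD j f)
      ((1/2 : ℂ) • (((fderiv ℝ (fderiv ℝ f) p).flip (Pi.single j 1)) -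
        Complex.I • ((fderiv ℝ (fderiv ℝ f) p).flip (Pi.single j Complex.I)))) p :=
    ((hA'.sub (hB'.const_mul Complex.I)).const_mul (1/2 : ℂ))
  rw [wD_of_hasFDerivAt hg j, wDbar_of_hasFDerivAt hg' k]
  simp only [ContinuousLinearMap.smul_apply, ContinuousLinearMap.add_apply,
    ContinuousLinearMap.sub_apply, ContinuousLinearMap.flip_apply, smul_eq_mul]
  rw [hsym (Pi.single j 1) (Pi.single k 1), hsym (Pi.single j 1) (Pi.single k Complex.I),
    hsym (Pi.single j Complex.I) (Pi.single k 1),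
    hsym (Pi.single j Complex.I) (Pi.single k Complex.I)]
  ring

lemma wDbar_wDbar_comm (hf : ContDiffAt ℝ (⊤ : ℕ∞) f p) (j k : Fin n) :
    wDbar j (wDbar k f) p = wDbar k (wDbar j f) p := by
  have hsym : ∀ v w, fderiv ℝ (fderiv ℝ f) p v w = fderiv ℝ (fderiv ℝ f) p w v :=
    hf.isSymmSndFDerivAt (by simp only [minSmoothness_of_isRCLikeNormedField]; exact WithTop.coe_le_coe.mpr le_top)
  have hA := hasFDerivAt_fderiv_apply hf (Pi.single k (1:ℂ))
  have hB := hasFDerivAt_fderiv_apply hf (Pi.single k Complex.I)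
  have hg : HasFDerivAt (wDbar k f)
      ((1/2 : ℂ) • (((fderiv ℝ (fderiv ℝ f) p).flip (Pi.single k 1)) +
        Complex.I • ((fderiv ℝ (fderiv ℝ f) p).flip (Pi.single k Complex.I)))) p :=
    ((hA.add (hB.const_mul Complex.I)).const_mul (1/2 : ℂ))
  have hA' := hasFDerivAt_fderiv_apply hf (Pi.single j (1:ℂ))
  have hB' := hasFDerivAt_fderiv_apply hf (Pi.single j Complex.I)
  have hg' : HasFDerivAt (wDbar j f)
      ((1/2 : ℂ) • (((fderiv ℝ (fderiv ℝ f) p).flip (Pi.single j 1)) +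
        Complex.I • ((fderiv ℝ (fderiv ℝ f) p).flip (Pi.single j Complex.I)))) p :=
    ((hA'.add (hB'.const_mul Complex.I)).const_mul (1/2 : ℂ))
  rw [wDbar_of_hasFDerivAt hg j, wDbar_of_hasFDerivAt hg' k]
  simp only [ContinuousLinearMap.smul_apply, ContinuousLinearMap.add_apply,
    ContinuousLinearMap.flip_apply, smul_eq_mul]
  rw [hsym (Pi.single j 1) (Pi.single k 1), hsym (Pi.single j 1) (Pi.single k Complex.I),
    hsym (Pi.single j Complex.I) (Pi.single k 1),
    hsym (Pi.single j Complex.I) (Pi.single k Complex.I)]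
  ring

end AuxTools2

noncomputable section Setup
open Complex

variable {d : ℕ} {μ : ℝ} {N : (Fin d → ℂ) → ℝ} {Ω : Set (Fin d → ℂ)}

/-- the real function `N(z)^μ - |w|²` on `ℂ^{d+1}` -/
def reH (d : ℕ) (μ : ℝ) (N : (Fin d → ℂ) → ℝ) : (Fin (d+1) → ℂ) → ℝ :=
  fun q => N (iotaC d q) ^ μ - ‖q (Fin.last d)‖ ^ 2

/-- its complexification -/
def Hc (d : ℕ) (μ : ℝ) (N : (Fin d → ℂ) → ℝ) : (Fin (d+1) → ℂ) → ℂ :=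
  fun q => ((reH d μ N q : ℝ) : ℂ)

/-- `1/H` -/
def sF (d : ℕ) (μ : ℝ) (N : (Fin d → ℂ) → ℝ) : (Fin (d+1) → ℂ) → ℂ :=
  fun q => (Hc d μ N q)⁻¹

lemma Hc_eq_sub : Hc d μ N = fun q =>
    NmuC d μ N (iotaC d q) - q (Fin.last d) * (starRingEnd ℂ) (q (Fin.last d)) := by
  funext q
  rw [Hc, reH, NmuC, mul_comm, Complex.conj_mul', Complex.ofReal_sub]
  simp

lemma cdiff_differentiableAt {n : ℕ} {f : (Fin n → ℂ) → ℂ} {p : Fin n → ℂ}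
    (h : ContDiffAt ℝ (⊤ : ℕ∞) f p) : DifferentiableAt ℝ f p :=
  h.differentiableAt (by norm_cast)

lemma NmuC_contDiffAt (hΩ : IsOpen Ω) (hNsm : ContDiffOn ℝ (⊤ : ℕ∞) N Ω)
    (hNpos : ∀ z ∈ Ω, 0 < N z) {z : Fin d → ℂ} (hz : z ∈ Ω) :
    ContDiffAt ℝ (⊤ : ℕ∞) (NmuC d μ N) z := by
  have h1 : ContDiffAt ℝ (⊤ : ℕ∞) N z := (hNsm.contDiffAt (hΩ.mem_nhds hz)).of_le (by simp)
  have h2 : ContDiffAt ℝ (⊤ : ℕ∞) (fun x : ℝ => x ^ μ) (N z) :=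
    Real.contDiffAt_rpow_const_of_ne (hNpos z hz).ne'
  have h3 : ContDiffAt ℝ (⊤ : ℕ∞) (fun z => N z ^ μ) z := h2.comp z h1
  exact (Complex.ofRealCLM.contDiff.contDiffAt (n := ((⊤:ℕ∞) : WithTop ℕ∞))).comp z h3

lemma reH_differentiableAt (hΩ : IsOpen Ω) (hNsm : ContDiffOn ℝ (⊤ : ℕ∞) N Ω)
    (hNpos : ∀ z ∈ Ω, 0 < N z) {q : Fin (d+1) → ℂ} (hq : iotaC d q ∈ Ω) :
    DifferentiableAt ℝ (reH d μ N) q := by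
  have h1 : ContDiffAt ℝ (⊤ : ℕ∞) N (iotaC d q) := (hNsm.contDiffAt (hΩ.mem_nhds hq)).of_le (by simp)
  have h2 : ContDiffAt ℝ (⊤ : ℕ∞) (fun x : ℝ => x ^ μ) (N (iotaC d q)) :=
    Real.contDiffAt_rpow_const_of_ne (hNpos _ hq).ne'
  have h3 : ContDiffAt ℝ (⊤ : ℕ∞) (fun z => N z ^ μ) (iotaC d q) := h2.comp _ h1
  have h4 : DifferentiableAt ℝ (fun q : Fin (d+1) → ℂ => N (iotaC d q) ^ μ) q :=
    (h3.differentiableAt (by norm_cast)).comp q (iotaC d).differentiableAt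
  have h5 : DifferentiableAt ℝ (fun q : Fin (d+1) → ℂ => ‖q (Fin.last d)‖ ^ 2) q := by
    have hfun : (fun q : Fin (d+1) → ℂ => ‖q (Fin.last d)‖ ^ 2)
        = fun q => (q (Fin.last d)).re ^ 2 + (q (Fin.last d)).im ^ 2 := by
      funext q; rw [Complex.sq_norm, Complex.normSq_apply]; ring
    rw [hfun]
    exact ((Complex.reCLM.comp (projC (Fin.last d))).differentiableAt.pow 2).add
      ((Complex.imCLM.comp (projC (Fin.last d))).differentiableAt.pow 2)
  exact h4.sub h5

lemma Hc_differentiableAt (hΩ : IsOpen Ω) (hNsm : ContDiffOn ℝ (⊤ : ℕ∞) N Ω)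
    (hNpos : ∀ z ∈ Ω, 0 < N z) {q : Fin (d+1) → ℂ} (hq : iotaC d q ∈ Ω) :
    DifferentiableAt ℝ (Hc d μ N) q :=
  Complex.ofRealCLM.differentiableAt.comp q (reH_differentiableAt hΩ hNsm hNpos hq)

lemma Hc_ne_zero {q : Fin (d+1) → ℂ} (hq2 : 0 < reH d μ N q) : Hc d μ N q ≠ 0 := by
  simp only [Hc, ne_eq, Complex.ofReal_eq_zero]
  exact hq2.ne'

lemma sF_differentiableAt (hΩ : IsOpen Ω) (hNsm : ContDiffOn ℝ (⊤ : ℕ∞) N Ω)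
    (hNpos : ∀ z ∈ Ω, 0 < N z) {q : Fin (d+1) → ℂ} (hq : iotaC d q ∈ Ω)
    (hq2 : 0 < reH d μ N q) : DifferentiableAt ℝ (sF d μ N) q :=
  (Hc_differentiableAt hΩ hNsm hNpos hq).inv (Hc_ne_zero hq2)

end Setup

noncomputable section Catalogue
open Complex

variable {d : ℕ} {μ : ℝ} {N : (Fin d → ℂ) → ℝ} {Ω : Set (Fin d → ℂ)}

lemma diff_NmuC_iota (hΩ : IsOpen Ω) (hNsm : ContDiffOn ℝ (⊤ : ℕ∞) N Ω)
    (hNpos : ∀ z ∈ Ω, 0 < N z) {q : Fin (d+1) → ℂ} (hq : iotaC d q ∈ Ω) :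
    DifferentiableAt ℝ (fun x => NmuC d μ N (iotaC d x)) q :=
  (cdiff_differentiableAt (NmuC_contDiffAt hΩ hNsm hNpos hq)).comp q (iotaC d).differentiableAt

lemma diff_B {q : Fin (d+1) → ℂ} :
    DifferentiableAt ℝ
      (fun x : Fin (d+1) → ℂ => x (Fin.last d) * (starRingEnd ℂ) (x (Fin.last d))) q :=
  (differentiableAt_coord _).mul (differentiableAt_coord_conj _)

lemma wD_cs_Hc (hΩ : IsOpen Ω) (hNsm : ContDiffOn ℝ (⊤ : ℕ∞) N Ω) (hNpos : ∀ z ∈ Ω, 0 < N z)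
    {q : Fin (d+1) → ℂ} (hq : iotaC d q ∈ Ω) (j : Fin d) :
    wD j.castSucc (Hc d μ N) q = wD j (NmuC d μ N) (iotaC d q) := by
  rw [Hc_eq_sub, wD_sub (diff_NmuC_iota hΩ hNsm hNpos hq) diff_B,
    wD_comp_iota _ _ (cdiff_differentiableAt (NmuC_contDiffAt hΩ hNsm hNpos hq)),
    wD_mul (differentiableAt_coord _) (differentiableAt_coord_conj _), wD_coord, wD_coord_conj,
    if_neg (Fin.castSucc_lt_last j).ne']
  ring

lemma wDbar_cs_Hc (hΩ : IsOpen Ω) (hNsm : ContDiffOn ℝ (⊤ : ℕ∞) N Ω) (hNpos : ∀ z ∈ Ω, 0 < N z)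
    {q : Fin (d+1) → ℂ} (hq : iotaC d q ∈ Ω) (j : Fin d) :
    wDbar j.castSucc (Hc d μ N) q = wDbar j (NmuC d μ N) (iotaC d q) := by
  rw [Hc_eq_sub, wDbar_sub (diff_NmuC_iota hΩ hNsm hNpos hq) diff_B,
    wDbar_comp_iota _ _ (cdiff_differentiableAt (NmuC_contDiffAt hΩ hNsm hNpos hq)),
    wDbar_mul (differentiableAt_coord _) (differentiableAt_coord_conj _), wDbar_coord,
    wDbar_coord_conj, if_neg (Fin.castSucc_lt_last j).ne']
  ring

lemma wD_last_Hc (hΩ : IsOpen Ω) (hNsm : ContDiffOn ℝ (⊤ : ℕ∞) N Ω) (hNpos : ∀ z ∈ Ω, 0 < N z)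
    {q : Fin (d+1) → ℂ} (hq : iotaC d q ∈ Ω) :
    wD (Fin.last d) (Hc d μ N) q = -((starRingEnd ℂ) (q (Fin.last d))) := by
  rw [Hc_eq_sub, wD_sub (diff_NmuC_iota hΩ hNsm hNpos hq) diff_B,
    wD_last_comp_iota _ _ (cdiff_differentiableAt (NmuC_contDiffAt hΩ hNsm hNpos hq)),
    wD_mul (differentiableAt_coord _) (differentiableAt_coord_conj _), wD_coord, wD_coord_conj,
    if_pos rfl]
  ring

lemma wDbar_last_Hc (hΩ : IsOpen Ω) (hNsm : ContDiffOn ℝ (⊤ : ℕ∞) N Ω) (hNpos : ∀ z ∈ Ω, 0 < N z)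
    {q : Fin (d+1) → ℂ} (hq : iotaC d q ∈ Ω) :
    wDbar (Fin.last d) (Hc d μ N) q = -(q (Fin.last d)) := by
  rw [Hc_eq_sub, wDbar_sub (diff_NmuC_iota hΩ hNsm hNpos hq) diff_B,
    wDbar_last_comp_iota _ _ (cdiff_differentiableAt (NmuC_contDiffAt hΩ hNsm hNpos hq)),
    wDbar_mul (differentiableAt_coord _) (differentiableAt_coord_conj _), wDbar_coord,
    wDbar_coord_conj, if_pos rfl]
  ring

lemma wD_cs_sF (hΩ : IsOpen Ω) (hNsm : ContDiffOn ℝ (⊤ : ℕ∞) N Ω) (hNpos : ∀ z ∈ Ω, 0 < N z)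
    {q : Fin (d+1) → ℂ} (hq : iotaC d q ∈ Ω) (hq2 : 0 < reH d μ N q) (k : Fin d) :
    wD k.castSucc (sF d μ N) q = -(wD k (NmuC d μ N) (iotaC d q)) * sF d μ N q ^ 2 := by
  rw [show sF d μ N = fun x => (Hc d μ N x)⁻¹ from rfl,
    wD_inv (Hc_differentiableAt hΩ hNsm hNpos hq) (Hc_ne_zero hq2),
    wD_cs_Hc hΩ hNsm hNpos hq]

lemma wDbar_cs_sF (hΩ : IsOpen Ω) (hNsm : ContDiffOn ℝ (⊤ : ℕ∞) N Ω) (hNpos : ∀ z ∈ Ω, 0 < N z)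
    {q : Fin (d+1) → ℂ} (hq : iotaC d q ∈ Ω) (hq2 : 0 < reH d μ N q) (k : Fin d) :
    wDbar k.castSucc (sF d μ N) q = -(wDbar k (NmuC d μ N) (iotaC d q)) * sF d μ N q ^ 2 := by
  rw [show sF d μ N = fun x => (Hc d μ N x)⁻¹ from rfl,
    wDbar_inv (Hc_differentiableAt hΩ hNsm hNpos hq) (Hc_ne_zero hq2),
    wDbar_cs_Hc hΩ hNsm hNpos hq]

lemma wD_last_sF (hΩ : IsOpen Ω) (hNsm : ContDiffOn ℝ (⊤ : ℕ∞) N Ω) (hNpos : ∀ z ∈ Ω, 0 < N z)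
    {q : Fin (d+1) → ℂ} (hq : iotaC d q ∈ Ω) (hq2 : 0 < reH d μ N q) :
    wD (Fin.last d) (sF d μ N) q = (starRingEnd ℂ) (q (Fin.last d)) * sF d μ N q ^ 2 := by
  rw [show sF d μ N = fun x => (Hc d μ N x)⁻¹ from rfl,
    wD_inv (Hc_differentiableAt hΩ hNsm hNpos hq) (Hc_ne_zero hq2),
    wD_last_Hc hΩ hNsm hNpos hq]
  ring

lemma wDbar_last_sF (hΩ : IsOpen Ω) (hNsm : ContDiffOn ℝ (⊤ : ℕ∞) N Ω) (hNpos : ∀ z ∈ Ω, 0 < N z)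
    {q : Fin (d+1) → ℂ} (hq : iotaC d q ∈ Ω) (hq2 : 0 < reH d μ N q) :
    wDbar (Fin.last d) (sF d μ N) q = q (Fin.last d) * sF d μ N q ^ 2 := by
  rw [show sF d μ N = fun x => (Hc d μ N x)⁻¹ from rfl,
    wDbar_inv (Hc_differentiableAt hΩ hNsm hNpos hq) (Hc_ne_zero hq2),
    wDbar_last_Hc hΩ hNsm hNpos hq]
  ring

lemma CHpot_eq : CHpot d μ N = fun p => -(((Real.log (reH d μ N p) : ℝ) : ℂ)) := rfl

lemma wDbar_cs_CHpot (hΩ : IsOpen Ω) (hNsm : ContDiffOn ℝ (⊤ : ℕ∞) N Ω) (hNpos : ∀ z ∈ Ω, 0 < N z)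
    {q : Fin (d+1) → ℂ} (hq : iotaC d q ∈ Ω) (hq2 : 0 < reH d μ N q) (j : Fin d) :
    wDbar j.castSucc (CHpot d μ N) q
      = -(wDbar j (NmuC d μ N) (iotaC d q)) * sF d μ N q := by
  rw [CHpot_eq, wDbar_neg,
    wDbar_ofReal_log (reH_differentiableAt hΩ hNsm hNpos hq) hq2.ne',
    show (fun x => ((reH d μ N x : ℝ) : ℂ)) = Hc d μ N from rfl,
    wDbar_cs_Hc hΩ hNsm hNpos hq]
  rw [show ((reH d μ N q : ℝ) : ℂ)⁻¹ = sF d μ N q from rfl]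
  ring

lemma wDbar_last_CHpot (hΩ : IsOpen Ω) (hNsm : ContDiffOn ℝ (⊤ : ℕ∞) N Ω) (hNpos : ∀ z ∈ Ω, 0 < N z)
    {q : Fin (d+1) → ℂ} (hq : iotaC d q ∈ Ω) (hq2 : 0 < reH d μ N q) :
    wDbar (Fin.last d) (CHpot d μ N) q = q (Fin.last d) * sF d μ N q := by
  rw [CHpot_eq, wDbar_neg,
    wDbar_ofReal_log (reH_differentiableAt hΩ hNsm hNpos hq) hq2.ne',
    show (fun x => ((reH d μ N x : ℝ) : ℂ)) = Hc d μ N from rfl,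
    wDbar_last_Hc hΩ hNsm hNpos hq]
  rw [show ((reH d μ N q : ℝ) : ℂ)⁻¹ = sF d μ N q from rfl]
  ring

end Catalogue

noncomputable section G2
open Complex

variable {d : ℕ} {μ : ℝ} {N : (Fin d → ℂ) → ℝ} {Ω : Set (Fin d → ℂ)}

/-- the domain of validity in `ℂ^{d+1}` -/
def Udom (d : ℕ) (μ : ℝ) (N : (Fin d → ℂ) → ℝ) (Ω : Set (Fin d → ℂ)) :
    Set (Fin (d+1) → ℂ) :=
  {q | iotaC d q ∈ Ω ∧ 0 < reH d μ N q}

lemma Udom_open (hΩ : IsOpen Ω) (hNsm : ContDiffOn ℝ (⊤ : ℕ∞) N Ω) (hNpos : ∀ z ∈ Ω, 0 < N z) :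
    IsOpen (Udom d μ N Ω) := by
  have hV : IsOpen ((iotaC d) ⁻¹' Ω) := hΩ.preimage (iotaC d).continuous
  have hcont : ContinuousOn (reH d μ N) ((iotaC d) ⁻¹' Ω) := by
    apply ContinuousOn.sub
    · exact ((hNsm.continuousOn.comp (iotaC d).continuous.continuousOn
        (fun x hx => hx)).rpow_const (fun x hx => Or.inl (hNpos _ hx).ne'))
    · exact (Continuous.continuousOn (by continuity))
  have : Udom d μ N Ω = ((iotaC d) ⁻¹' Ω) ∩ (reH d μ N) ⁻¹' (Set.Ioi 0) := by
    ext q; simp [Udom, Set.mem_Ioi]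
  rw [this]
  exact hcont.isOpen_inter_preimage hV isOpen_Ioi

lemma G2zz (hΩ : IsOpen Ω) (hNsm : ContDiffOn ℝ (⊤ : ℕ∞) N Ω) (hNpos : ∀ z ∈ Ω, 0 < N z)
    {q : Fin (d+1) → ℂ} (hq : q ∈ Udom d μ N Ω) (i j : Fin d) :
    gCH d μ N i.castSucc j.castSucc q
      = -(wD i (wDbar j (NmuC d μ N)) (iotaC d q)) * sF d μ N q
        + wDbar j (NmuC d μ N) (iotaC d q) * wD i (NmuC d μ N) (iotaC d q)
          * sF d μ N q ^ 2 := by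
  have hev : wDbar j.castSucc (CHpot d μ N) =ᶠ[nhds q]
      (fun x => -(wDbar j (NmuC d μ N) (iotaC d x)) * sF d μ N x) :=
    eventuallyEq_of_isOpen (Udom_open hΩ hNsm hNpos) hq
      (fun x hx => wDbar_cs_CHpot hΩ hNsm hNpos hx.1 hx.2 j)
  have hda : DifferentiableAt ℝ (fun x => -(wDbar j (NmuC d μ N) (iotaC d x))) q :=
    ((cdiff_differentiableAt ((NmuC_contDiffAt hΩ hNsm hNpos hq.1).wDbar_smooth j)).comp q
      (iotaC d).differentiableAt).neg
  rw [show gCH d μ N i.castSucc j.castSucc q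
      = wD i.castSucc (wDbar j.castSucc (CHpot d μ N)) q from rfl,
    wD_congr hev, wD_mul hda (sF_differentiableAt hΩ hNsm hNpos hq.1 hq.2),
    wD_neg, wD_comp_iota _ _ (cdiff_differentiableAt
      ((NmuC_contDiffAt hΩ hNsm hNpos hq.1).wDbar_smooth j)),
    wD_cs_sF hΩ hNsm hNpos hq.1 hq.2]
  ring

lemma G2Lz (hΩ : IsOpen Ω) (hNsm : ContDiffOn ℝ (⊤ : ℕ∞) N Ω) (hNpos : ∀ z ∈ Ω, 0 < N z)
    {q : Fin (d+1) → ℂ} (hq : q ∈ Udom d μ N Ω) (j : Fin d) :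
    gCH d μ N (Fin.last d) j.castSucc q
      = -(wDbar j (NmuC d μ N) (iotaC d q)) * (starRingEnd ℂ) (q (Fin.last d))
          * sF d μ N q ^ 2 := by
  have hev : wDbar j.castSucc (CHpot d μ N) =ᶠ[nhds q]
      (fun x => -(wDbar j (NmuC d μ N) (iotaC d x)) * sF d μ N x) :=
    eventuallyEq_of_isOpen (Udom_open hΩ hNsm hNpos) hq
      (fun x hx => wDbar_cs_CHpot hΩ hNsm hNpos hx.1 hx.2 j)
  have hda : DifferentiableAt ℝ (fun x => -(wDbar j (NmuC d μ N) (iotaC d x))) q :=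
    ((cdiff_differentiableAt ((NmuC_contDiffAt hΩ hNsm hNpos hq.1).wDbar_smooth j)).comp q
      (iotaC d).differentiableAt).neg
  rw [show gCH d μ N (Fin.last d) j.castSucc q
      = wD (Fin.last d) (wDbar j.castSucc (CHpot d μ N)) q from rfl,
    wD_congr hev, wD_mul hda (sF_differentiableAt hΩ hNsm hNpos hq.1 hq.2),
    wD_neg, wD_last_comp_iota _ _ (cdiff_differentiableAt
      ((NmuC_contDiffAt hΩ hNsm hNpos hq.1).wDbar_smooth j)),
    wD_last_sF hΩ hNsm hNpos hq.1 hq.2]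
  ring

lemma G2zL (hΩ : IsOpen Ω) (hNsm : ContDiffOn ℝ (⊤ : ℕ∞) N Ω) (hNpos : ∀ z ∈ Ω, 0 < N z)
    {q : Fin (d+1) → ℂ} (hq : q ∈ Udom d μ N Ω) (j : Fin d) :
    gCH d μ N j.castSucc (Fin.last d) q
      = -(q (Fin.last d)) * wD j (NmuC d μ N) (iotaC d q) * sF d μ N q ^ 2 := by
  have hev : wDbar (Fin.last d) (CHpot d μ N) =ᶠ[nhds q]
      (fun x => x (Fin.last d) * sF d μ N x) :=
    eventuallyEq_of_isOpen (Udom_open hΩ hNsm hNpos) hq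
      (fun x hx => wDbar_last_CHpot hΩ hNsm hNpos hx.1 hx.2)
  rw [show gCH d μ N j.castSucc (Fin.last d) q
      = wD j.castSucc (wDbar (Fin.last d) (CHpot d μ N)) q from rfl,
    wD_congr hev,
    wD_mul (differentiableAt_coord _) (sF_differentiableAt hΩ hNsm hNpos hq.1 hq.2),
    wD_coord, if_neg (Fin.castSucc_lt_last j).ne', wD_cs_sF hΩ hNsm hNpos hq.1 hq.2]
  ring

lemma G2LL (hΩ : IsOpen Ω) (hNsm : ContDiffOn ℝ (⊤ : ℕ∞) N Ω) (hNpos : ∀ z ∈ Ω, 0 < N z)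
    {q : Fin (d+1) → ℂ} (hq : q ∈ Udom d μ N Ω) :
    gCH d μ N (Fin.last d) (Fin.last d) q
      = sF d μ N q + q (Fin.last d) * (starRingEnd ℂ) (q (Fin.last d))
          * sF d μ N q ^ 2 := by
  have hev : wDbar (Fin.last d) (CHpot d μ N) =ᶠ[nhds q]
      (fun x => x (Fin.last d) * sF d μ N x) :=
    eventuallyEq_of_isOpen (Udom_open hΩ hNsm hNpos) hq
      (fun x hx => wDbar_last_CHpot hΩ hNsm hNpos hx.1 hx.2)
  rw [show gCH d μ N (Fin.last d) (Fin.last d) q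
      = wD (Fin.last d) (wDbar (Fin.last d) (CHpot d μ N)) q from rfl,
    wD_congr hev,
    wD_mul (differentiableAt_coord _) (sF_differentiableAt hΩ hNsm hNpos hq.1 hq.2),
    wD_coord, if_pos rfl, wD_last_sF hΩ hNsm hNpos hq.1 hq.2]
  ring

end G2

noncomputable section T3sec
open Complex

variable {n d : ℕ} {μ : ℝ} {N : (Fin d → ℂ) → ℝ} {Ω : Set (Fin d → ℂ)}
variable {f : (Fin n → ℂ) → ℂ} {p : Fin n → ℂ}

lemma wD_sq (hf : DifferentiableAt ℝ f p) (j : Fin n) :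
    wD j (fun q => f q ^ 2) p = 2 * f p * wD j f p := by
  have h : (fun q => f q ^ 2) = fun q => f q * f q := by funext q; ring
  rw [h, wD_mul hf hf]; ring

lemma wDbar_sq (hf : DifferentiableAt ℝ f p) (j : Fin n) :
    wDbar j (fun q => f q ^ 2) p = 2 * f p * wDbar j f p := by
  have h : (fun q => f q ^ 2) = fun q => f q * f q := by funext q; ring
  rw [h, wDbar_mul hf hf]; ring

lemma wD_cube (hf : DifferentiableAt ℝ f p) (j : Fin n) :
    wD j (fun q => f q ^ 3) p = 3 * f p ^ 2 * wD j f p := by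
  have h : (fun q => f q ^ 3) = fun q => (f q * f q) * f q := by funext q; ring
  rw [h, wD_mul (hf.fun_mul hf) hf, wD_mul hf hf]; ring

lemma wDbar_cube (hf : DifferentiableAt ℝ f p) (j : Fin n) :
    wDbar j (fun q => f q ^ 3) p = 3 * f p ^ 2 * wDbar j f p := by
  have h : (fun q => f q ^ 3) = fun q => (f q * f q) * f q := by funext q; ring
  rw [h, wDbar_mul (hf.fun_mul hf) hf, wDbar_mul hf hf]; ring

lemma T3zz (hΩ : IsOpen Ω) (hNsm : ContDiffOn ℝ (⊤ : ℕ∞) N Ω) (hNpos : ∀ z ∈ Ω, 0 < N z)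
    {q : Fin (d+1) → ℂ} (hq : q ∈ Udom d μ N Ω) (i j k : Fin d) :
    wD k.castSucc (gCH d μ N i.castSucc j.castSucc) q
      = -(wD k (wD i (wDbar j (NmuC d μ N))) (iotaC d q)) * sF d μ N q
        + wD i (wDbar j (NmuC d μ N)) (iotaC d q) * wD k (NmuC d μ N) (iotaC d q)
            * sF d μ N q ^ 2
        + wD k (wDbar j (NmuC d μ N)) (iotaC d q) * wD i (NmuC d μ N) (iotaC d q)
            * sF d μ N q ^ 2
        + wDbar j (NmuC d μ N) (iotaC d q) * wD k (wD i (NmuC d μ N)) (iotaC d q)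
            * sF d μ N q ^ 2
        + (-2) * wDbar j (NmuC d μ N) (iotaC d q) * wD i (NmuC d μ N) (iotaC d q)
            * wD k (NmuC d μ N) (iotaC d q) * sF d μ N q ^ 3 := by
  have hmC := NmuC_contDiffAt (μ := μ) hΩ hNsm hNpos hq.1
  have hev : gCH d μ N i.castSucc j.castSucc =ᶠ[nhds q]
      (fun x => -(wD i (wDbar j (NmuC d μ N)) (iotaC d x)) * sF d μ N x
        + wDbar j (NmuC d μ N) (iotaC d x) * wD i (NmuC d μ N) (iotaC d x)
          * sF d μ N x ^ 2) :=
    eventuallyEq_of_isOpen (Udom_open hΩ hNsm hNpos) hq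
      (fun x hx => G2zz hΩ hNsm hNpos hx i j)
  have hiota := (iotaC d).differentiableAt (x := q)
  have haj : DifferentiableAt ℝ (wDbar j (NmuC d μ N)) (iotaC d q) :=
    cdiff_differentiableAt (hmC.wDbar_smooth j)
  have hbij : DifferentiableAt ℝ (wD i (wDbar j (NmuC d μ N))) (iotaC d q) :=
    cdiff_differentiableAt ((hmC.wDbar_smooth j).wD_smooth i)
  have hui : DifferentiableAt ℝ (wD i (NmuC d μ N)) (iotaC d q) :=
    cdiff_differentiableAt (hmC.wD_smooth i)
  have hds := sF_differentiableAt hΩ hNsm hNpos hq.1 hq.2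
  have hajq : DifferentiableAt ℝ (fun x => wDbar j (NmuC d μ N) (iotaC d x)) q :=
    haj.comp q hiota
  have hbijq : DifferentiableAt ℝ (fun x => wD i (wDbar j (NmuC d μ N)) (iotaC d x)) q :=
    hbij.comp q hiota
  have huiq : DifferentiableAt ℝ (fun x => wD i (NmuC d μ N) (iotaC d x)) q :=
    hui.comp q hiota
  rw [wD_congr hev,
    wD_add (hbijq.fun_neg.fun_mul hds) ((hajq.fun_mul huiq).fun_mul (hds.fun_pow 2)),
    wD_mul hbijq.fun_neg hds, wD_neg, wD_comp_iota _ _ hbij,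
    wD_cs_sF hΩ hNsm hNpos hq.1 hq.2,
    wD_mul (hajq.fun_mul huiq) (hds.fun_pow 2),
    wD_mul hajq huiq,
    wD_comp_iota _ _ haj, wD_comp_iota _ _ hui, wD_sq hds,
    wD_cs_sF hΩ hNsm hNpos hq.1 hq.2]
  ring

end T3sec

noncomputable section T3rest
open Complex

variable {d : ℕ} {μ : ℝ} {N : (Fin d → ℂ) → ℝ} {Ω : Set (Fin d → ℂ)}

lemma T3Lz (hΩ : IsOpen Ω) (hNsm : ContDiffOn ℝ (⊤ : ℕ∞) N Ω) (hNpos : ∀ z ∈ Ω, 0 < N z)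
    {q : Fin (d+1) → ℂ} (hq : q ∈ Udom d μ N Ω) (j k : Fin d) :
    wD k.castSucc (gCH d μ N (Fin.last d) j.castSucc) q
      = -(wD k (wDbar j (NmuC d μ N)) (iotaC d q)) * (starRingEnd ℂ) (q (Fin.last d))
          * sF d μ N q ^ 2
        + 2 * wDbar j (NmuC d μ N) (iotaC d q) * wD k (NmuC d μ N) (iotaC d q)
          * (starRingEnd ℂ) (q (Fin.last d)) * sF d μ N q ^ 3 := by
  have hmC := NmuC_contDiffAt (μ := μ) hΩ hNsm hNpos hq.1
  have hev : gCH d μ N (Fin.last d) j.castSucc =ᶠ[nhds q]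
      (fun x => -(wDbar j (NmuC d μ N) (iotaC d x)) * (starRingEnd ℂ) (x (Fin.last d))
        * sF d μ N x ^ 2) :=
    eventuallyEq_of_isOpen (Udom_open hΩ hNsm hNpos) hq
      (fun x hx => G2Lz hΩ hNsm hNpos hx j)
  have hiota := (iotaC d).differentiableAt (x := q)
  have haj : DifferentiableAt ℝ (wDbar j (NmuC d μ N)) (iotaC d q) :=
    cdiff_differentiableAt (hmC.wDbar_smooth j)
  have hajq : DifferentiableAt ℝ (fun x => wDbar j (NmuC d μ N) (iotaC d x)) q :=
    haj.comp q hiota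
  have hds := sF_differentiableAt hΩ hNsm hNpos hq.1 hq.2
  have hcl : DifferentiableAt ℝ
      (fun x : Fin (d+1) → ℂ => (starRingEnd ℂ) (x (Fin.last d))) q :=
    differentiableAt_coord_conj _
  rw [wD_congr hev,
    wD_mul (hajq.fun_neg.fun_mul hcl) (hds.fun_pow 2),
    wD_mul hajq.fun_neg hcl, wD_neg, wD_comp_iota _ _ haj, wD_coord_conj, wD_sq hds,
    wD_cs_sF hΩ hNsm hNpos hq.1 hq.2]
  ring

lemma T3kLL (hΩ : IsOpen Ω) (hNsm : ContDiffOn ℝ (⊤ : ℕ∞) N Ω) (hNpos : ∀ z ∈ Ω, 0 < N z)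
    {q : Fin (d+1) → ℂ} (hq : q ∈ Udom d μ N Ω) (k : Fin d) :
    wD k.castSucc (gCH d μ N (Fin.last d) (Fin.last d)) q
      = -(wD k (NmuC d μ N) (iotaC d q)) * sF d μ N q ^ 2
        + (-2) * q (Fin.last d) * (starRingEnd ℂ) (q (Fin.last d))
          * wD k (NmuC d μ N) (iotaC d q) * sF d μ N q ^ 3 := by
  have hmC := NmuC_contDiffAt (μ := μ) hΩ hNsm hNpos hq.1
  have hev : gCH d μ N (Fin.last d) (Fin.last d) =ᶠ[nhds q]
      (fun x => sF d μ N x + x (Fin.last d) * (starRingEnd ℂ) (x (Fin.last d))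
        * sF d μ N x ^ 2) :=
    eventuallyEq_of_isOpen (Udom_open hΩ hNsm hNpos) hq
      (fun x hx => G2LL hΩ hNsm hNpos hx)
  have hds := sF_differentiableAt hΩ hNsm hNpos hq.1 hq.2
  have hql : DifferentiableAt ℝ (fun x : Fin (d+1) → ℂ => x (Fin.last d)) q :=
    differentiableAt_coord _
  have hcl : DifferentiableAt ℝ
      (fun x : Fin (d+1) → ℂ => (starRingEnd ℂ) (x (Fin.last d))) q :=
    differentiableAt_coord_conj _
  rw [wD_congr hev,
    wD_add hds ((hql.fun_mul hcl).fun_mul (hds.fun_pow 2)),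
    wD_cs_sF hΩ hNsm hNpos hq.1 hq.2,
    wD_mul (hql.fun_mul hcl) (hds.fun_pow 2),
    wD_mul hql hcl, wD_coord, wD_coord_conj, if_neg (Fin.castSucc_lt_last k).ne',
    wD_sq hds, wD_cs_sF hΩ hNsm hNpos hq.1 hq.2]
  ring

lemma T3LzL (hΩ : IsOpen Ω) (hNsm : ContDiffOn ℝ (⊤ : ℕ∞) N Ω) (hNpos : ∀ z ∈ Ω, 0 < N z)
    {q : Fin (d+1) → ℂ} (hq : q ∈ Udom d μ N Ω) (j : Fin d) :
    wD (Fin.last d) (gCH d μ N j.castSucc (Fin.last d)) q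
      = -(wD j (NmuC d μ N) (iotaC d q)) * sF d μ N q ^ 2
        + (-2) * q (Fin.last d) * (starRingEnd ℂ) (q (Fin.last d))
          * wD j (NmuC d μ N) (iotaC d q) * sF d μ N q ^ 3 := by
  have hmC := NmuC_contDiffAt (μ := μ) hΩ hNsm hNpos hq.1
  have hev : gCH d μ N j.castSucc (Fin.last d) =ᶠ[nhds q]
      (fun x => -(x (Fin.last d)) * wD j (NmuC d μ N) (iotaC d x) * sF d μ N x ^ 2) :=
    eventuallyEq_of_isOpen (Udom_open hΩ hNsm hNpos) hq
      (fun x hx => G2zL hΩ hNsm hNpos hx j)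
  have hiota := (iotaC d).differentiableAt (x := q)
  have huj : DifferentiableAt ℝ (wD j (NmuC d μ N)) (iotaC d q) :=
    cdiff_differentiableAt (hmC.wD_smooth j)
  have hujq : DifferentiableAt ℝ (fun x => wD j (NmuC d μ N) (iotaC d x)) q :=
    huj.comp q hiota
  have hds := sF_differentiableAt hΩ hNsm hNpos hq.1 hq.2
  have hql : DifferentiableAt ℝ (fun x : Fin (d+1) → ℂ => x (Fin.last d)) q :=
    differentiableAt_coord _
  rw [wD_congr hev,
    wD_mul (hql.fun_neg.fun_mul hujq) (hds.fun_pow 2),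
    wD_mul hql.fun_neg hujq, wD_neg, wD_coord, if_pos rfl,
    wD_last_comp_iota _ _ huj, wD_sq hds, wD_last_sF hΩ hNsm hNpos hq.1 hq.2]
  ring

lemma T3LLz (hΩ : IsOpen Ω) (hNsm : ContDiffOn ℝ (⊤ : ℕ∞) N Ω) (hNpos : ∀ z ∈ Ω, 0 < N z)
    {q : Fin (d+1) → ℂ} (hq : q ∈ Udom d μ N Ω) (j : Fin d) :
    wD (Fin.last d) (gCH d μ N (Fin.last d) j.castSucc) q
      = (-2) * wDbar j (NmuC d μ N) (iotaC d q) * (starRingEnd ℂ) (q (Fin.last d)) ^ 2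
          * sF d μ N q ^ 3 := by
  have hmC := NmuC_contDiffAt (μ := μ) hΩ hNsm hNpos hq.1
  have hev : gCH d μ N (Fin.last d) j.castSucc =ᶠ[nhds q]
      (fun x => -(wDbar j (NmuC d μ N) (iotaC d x)) * (starRingEnd ℂ) (x (Fin.last d))
        * sF d μ N x ^ 2) :=
    eventuallyEq_of_isOpen (Udom_open hΩ hNsm hNpos) hq
      (fun x hx => G2Lz hΩ hNsm hNpos hx j)
  have hiota := (iotaC d).differentiableAt (x := q)
  have haj : DifferentiableAt ℝ (wDbar j (NmuC d μ N)) (iotaC d q) :=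
    cdiff_differentiableAt (hmC.wDbar_smooth j)
  have hajq : DifferentiableAt ℝ (fun x => wDbar j (NmuC d μ N) (iotaC d x)) q :=
    haj.comp q hiota
  have hds := sF_differentiableAt hΩ hNsm hNpos hq.1 hq.2
  have hcl : DifferentiableAt ℝ
      (fun x : Fin (d+1) → ℂ => (starRingEnd ℂ) (x (Fin.last d))) q :=
    differentiableAt_coord_conj _
  rw [wD_congr hev,
    wD_mul (hajq.fun_neg.fun_mul hcl) (hds.fun_pow 2),
    wD_mul hajq.fun_neg hcl, wD_neg, wD_last_comp_iota _ _ haj, wD_coord_conj,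
    wD_sq hds, wD_last_sF hΩ hNsm hNpos hq.1 hq.2]
  ring

lemma T3LLL (hΩ : IsOpen Ω) (hNsm : ContDiffOn ℝ (⊤ : ℕ∞) N Ω) (hNpos : ∀ z ∈ Ω, 0 < N z)
    {q : Fin (d+1) → ℂ} (hq : q ∈ Udom d μ N Ω) :
    wD (Fin.last d) (gCH d μ N (Fin.last d) (Fin.last d)) q
      = 2 * (starRingEnd ℂ) (q (Fin.last d)) * sF d μ N q ^ 2
        + 2 * q (Fin.last d) * (starRingEnd ℂ) (q (Fin.last d)) ^ 2
          * sF d μ N q ^ 3 := by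
  have hev : gCH d μ N (Fin.last d) (Fin.last d) =ᶠ[nhds q]
      (fun x => sF d μ N x + x (Fin.last d) * (starRingEnd ℂ) (x (Fin.last d))
        * sF d μ N x ^ 2) :=
    eventuallyEq_of_isOpen (Udom_open hΩ hNsm hNpos) hq
      (fun x hx => G2LL hΩ hNsm hNpos hx)
  have hds := sF_differentiableAt hΩ hNsm hNpos hq.1 hq.2
  have hql : DifferentiableAt ℝ (fun x : Fin (d+1) → ℂ => x (Fin.last d)) q :=
    differentiableAt_coord _
  have hcl : DifferentiableAt ℝ
      (fun x : Fin (d+1) → ℂ => (starRingEnd ℂ) (x (Fin.last d))) q :=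
    differentiableAt_coord_conj _
  rw [wD_congr hev,
    wD_add hds ((hql.fun_mul hcl).fun_mul (hds.fun_pow 2)),
    wD_last_sF hΩ hNsm hNpos hq.1 hq.2,
    wD_mul (hql.fun_mul hcl) (hds.fun_pow 2),
    wD_mul hql hcl, wD_coord, wD_coord_conj, if_pos rfl,
    wD_sq hds, wD_last_sF hΩ hNsm hNpos hq.1 hq.2]
  ring

end T3rest

noncomputable section OmSide
open Complex

variable {d : ℕ} {μ : ℝ} {N : (Fin d → ℂ) → ℝ} {Ω : Set (Fin d → ℂ)}

/-- `1/N^μ` -/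
def rF (d : ℕ) (μ : ℝ) (N : (Fin d → ℂ) → ℝ) : (Fin d → ℂ) → ℂ :=
  fun z => (NmuC d μ N z)⁻¹

lemma NmuC_ne_zero (hNpos : ∀ z ∈ Ω, 0 < N z) {z : Fin d → ℂ} (hz : z ∈ Ω) :
    NmuC d μ N z ≠ 0 := by
  simp only [NmuC, ne_eq, Complex.ofReal_eq_zero]
  exact (Real.rpow_pos_of_pos (hNpos z hz) μ).ne'

lemma Nmu_real_differentiableAt (hΩ : IsOpen Ω) (hNsm : ContDiffOn ℝ (⊤ : ℕ∞) N Ω)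
    (hNpos : ∀ z ∈ Ω, 0 < N z) {z : Fin d → ℂ} (hz : z ∈ Ω) :
    DifferentiableAt ℝ (fun y => N y ^ μ) z := by
  have h1 : ContDiffAt ℝ (⊤ : ℕ∞) N z := (hNsm.contDiffAt (hΩ.mem_nhds hz)).of_le (by simp)
  have h2 : ContDiffAt ℝ (⊤ : ℕ∞) (fun x : ℝ => x ^ μ) (N z) :=
    Real.contDiffAt_rpow_const_of_ne (hNpos z hz).ne'
  exact (h2.comp z h1).differentiableAt (by norm_cast)

lemma rF_differentiableAt (hΩ : IsOpen Ω) (hNsm : ContDiffOn ℝ (⊤ : ℕ∞) N Ω)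
    (hNpos : ∀ z ∈ Ω, 0 < N z) {z : Fin d → ℂ} (hz : z ∈ Ω) :
    DifferentiableAt ℝ (rF d μ N) z :=
  (cdiff_differentiableAt (NmuC_contDiffAt hΩ hNsm hNpos hz)).inv (NmuC_ne_zero hNpos hz)

lemma wD_rF (hΩ : IsOpen Ω) (hNsm : ContDiffOn ℝ (⊤ : ℕ∞) N Ω) (hNpos : ∀ z ∈ Ω, 0 < N z)
    {z : Fin d → ℂ} (hz : z ∈ Ω) (k : Fin d) :
    wD k (rF d μ N) z = -(wD k (NmuC d μ N) z) * rF d μ N z ^ 2 := by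
  rw [show rF d μ N = fun x => (NmuC d μ N x)⁻¹ from rfl,
    wD_inv (cdiff_differentiableAt (NmuC_contDiffAt hΩ hNsm hNpos hz))
      (NmuC_ne_zero hNpos hz)]

lemma wDbar_rF (hΩ : IsOpen Ω) (hNsm : ContDiffOn ℝ (⊤ : ℕ∞) N Ω) (hNpos : ∀ z ∈ Ω, 0 < N z)
    {z : Fin d → ℂ} (hz : z ∈ Ω) (k : Fin d) :
    wDbar k (rF d μ N) z = -(wDbar k (NmuC d μ N) z) * rF d μ N z ^ 2 := by
  rw [show rF d μ N = fun x => (NmuC d μ N x)⁻¹ from rfl,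
    wDbar_inv (cdiff_differentiableAt (NmuC_contDiffAt hΩ hNsm hNpos hz))
      (NmuC_ne_zero hNpos hz)]

lemma wDbar_logm (hΩ : IsOpen Ω) (hNsm : ContDiffOn ℝ (⊤ : ℕ∞) N Ω) (hNpos : ∀ z ∈ Ω, 0 < N z)
    {z : Fin d → ℂ} (hz : z ∈ Ω) (j : Fin d) :
    wDbar j (fun y => ((Real.log (N y ^ μ) : ℝ) : ℂ)) z
      = wDbar j (NmuC d μ N) z * rF d μ N z := by
  rw [wDbar_ofReal_log (Nmu_real_differentiableAt hΩ hNsm hNpos hz)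
      (Real.rpow_pos_of_pos (hNpos z hz) μ).ne',
    show (fun y => ((N y ^ μ : ℝ) : ℂ)) = NmuC d μ N from rfl]
  rw [show ((N z ^ μ : ℝ) : ℂ)⁻¹ = rF d μ N z from rfl]
  ring

lemma G2om (hΩ : IsOpen Ω) (hNsm : ContDiffOn ℝ (⊤ : ℕ∞) N Ω) (hNpos : ∀ z ∈ Ω, 0 < N z)
    {z : Fin d → ℂ} (hz : z ∈ Ω) (i j : Fin d) :
    gOm d μ N i j z
      = -(wD i (wDbar j (NmuC d μ N)) z) * rF d μ N z
        + wDbar j (NmuC d μ N) z * wD i (NmuC d μ N) z * rF d μ N z ^ 2 := by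
  have hmC := NmuC_contDiffAt (μ := μ) hΩ hNsm hNpos hz
  have hev : wDbar j (fun y => ((Real.log (N y ^ μ) : ℝ) : ℂ)) =ᶠ[nhds z]
      (fun x => wDbar j (NmuC d μ N) x * rF d μ N x) :=
    eventuallyEq_of_isOpen hΩ hz (fun x hx => wDbar_logm hΩ hNsm hNpos hx j)
  have haj : DifferentiableAt ℝ (wDbar j (NmuC d μ N)) z :=
    cdiff_differentiableAt (hmC.wDbar_smooth j)
  rw [show gOm d μ N i j z
      = -(wD i (wDbar j (fun y => ((Real.log (N y ^ μ) : ℝ) : ℂ))) z) from rfl,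
    wD_congr hev, wD_mul haj (rF_differentiableAt hΩ hNsm hNpos hz),
    wD_rF hΩ hNsm hNpos hz]
  ring

lemma T3om (hΩ : IsOpen Ω) (hNsm : ContDiffOn ℝ (⊤ : ℕ∞) N Ω) (hNpos : ∀ z ∈ Ω, 0 < N z)
    {z : Fin d → ℂ} (hz : z ∈ Ω) (i j k : Fin d) :
    wD k (gOm d μ N i j) z
      = -(wD k (wD i (wDbar j (NmuC d μ N))) z) * rF d μ N z
        + wD i (wDbar j (NmuC d μ N)) z * wD k (NmuC d μ N) z * rF d μ N z ^ 2
        + wD k (wDbar j (NmuC d μ N)) z * wD i (NmuC d μ N) z * rF d μ N z ^ 2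
        + wDbar j (NmuC d μ N) z * wD k (wD i (NmuC d μ N)) z * rF d μ N z ^ 2
        + (-2) * wDbar j (NmuC d μ N) z * wD i (NmuC d μ N) z * wD k (NmuC d μ N) z
          * rF d μ N z ^ 3 := by
  have hmC := NmuC_contDiffAt (μ := μ) hΩ hNsm hNpos hz
  have hev : gOm d μ N i j =ᶠ[nhds z]
      (fun x => -(wD i (wDbar j (NmuC d μ N)) x) * rF d μ N x
        + wDbar j (NmuC d μ N) x * wD i (NmuC d μ N) x * rF d μ N x ^ 2) :=
    eventuallyEq_of_isOpen hΩ hz (fun x hx => G2om hΩ hNsm hNpos hx i j)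
  have haj : DifferentiableAt ℝ (wDbar j (NmuC d μ N)) z :=
    cdiff_differentiableAt (hmC.wDbar_smooth j)
  have hbij : DifferentiableAt ℝ (wD i (wDbar j (NmuC d μ N))) z :=
    cdiff_differentiableAt ((hmC.wDbar_smooth j).wD_smooth i)
  have hui : DifferentiableAt ℝ (wD i (NmuC d μ N)) z :=
    cdiff_differentiableAt (hmC.wD_smooth i)
  have hdr := rF_differentiableAt (μ := μ) hΩ hNsm hNpos hz
  rw [wD_congr hev,
    wD_add (hbij.fun_neg.fun_mul hdr) ((haj.fun_mul hui).fun_mul (hdr.fun_pow 2)),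
    wD_mul hbij.fun_neg hdr, wD_neg, wD_rF hΩ hNsm hNpos hz,
    wD_mul (haj.fun_mul hui) (hdr.fun_pow 2),
    wD_mul haj hui, wD_sq hdr, wD_rF hΩ hNsm hNpos hz]
  ring

end OmSide

noncomputable section Eval
open Complex

variable {d : ℕ} {μ : ℝ} {N : (Fin d → ℂ) → ℝ} {Ω : Set (Fin d → ℂ)}

lemma snoc_mem_U (hNpos : ∀ z ∈ Ω, 0 < N z) (h0 : (0 : Fin d → ℂ) ∈ Ω) (hN0 : N 0 = 1)
    {w : ℂ} (hw : ‖w‖ < 1) :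
    Fin.snoc (0 : Fin d → ℂ) w ∈ Udom d μ N Ω := by
  have hι : iotaC d (Fin.snoc (0 : Fin d → ℂ) w) = 0 := by
    funext j; simp [iotaC_apply]
  constructor
  · rw [hι]; exact h0
  · show 0 < reH d μ N _
    rw [reH, hι, hN0, Real.one_rpow, Fin.snoc_last]
    nlinarith [norm_nonneg w]

lemma iota_snoc0 {w : ℂ} : iotaC d (Fin.snoc (0 : Fin d → ℂ) w) = 0 := by
  funext j; simp [iotaC_apply]

lemma sF_snoc (hN0 : N 0 = 1) {w : ℂ} :
    sF d μ N (Fin.snoc (0 : Fin d → ℂ) w) = (1 - w * (starRingEnd ℂ) w)⁻¹ := by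
  rw [sF, Hc, reH, iota_snoc0, hN0, Real.one_rpow, Fin.snoc_last, Complex.mul_conj,
    Complex.normSq_eq_norm_sq]
  push_cast
  ring_nf

lemma one_sub_mul_conj_ne {w : ℂ} (hw : ‖w‖ < 1) :
    1 - w * (starRingEnd ℂ) w ≠ 0 := by
  rw [Complex.mul_conj, Complex.normSq_eq_norm_sq]
  intro h
  have h2 : ((1 - ‖w‖ ^ 2 : ℝ) : ℂ) = 0 := by push_cast at h ⊢; linear_combination h
  rw [Complex.ofReal_eq_zero] at h2
  nlinarith [norm_nonneg w]

lemma case5 (hΩ : IsOpen Ω) (hNsm : ContDiffOn ℝ (⊤ : ℕ∞) N Ω) (hNpos : ∀ z ∈ Ω, 0 < N z)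
    (h0 : (0 : Fin d → ℂ) ∈ Ω) (hN0 : N 0 = 1) {w : ℂ} (hw : ‖w‖ < 1) :
    wDbar (Fin.last d) (wD (Fin.last d) (gCH d μ N (Fin.last d) (Fin.last d)))
        (Fin.snoc (0 : Fin d → ℂ) w)
      = ((2 + 4 * ‖w‖ ^ 2 : ℝ) : ℂ) / ((1 - ‖w‖ ^ 2 : ℝ) : ℂ) ^ 4 := by
  have hp0 := snoc_mem_U (μ := μ) hNpos h0 hN0 hw
  set p₀ : Fin (d+1) → ℂ := Fin.snoc (0 : Fin d → ℂ) w with hp₀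
  have hev : wD (Fin.last d) (gCH d μ N (Fin.last d) (Fin.last d)) =ᶠ[nhds p₀]
      (fun x => 2 * (starRingEnd ℂ) (x (Fin.last d)) * sF d μ N x ^ 2
        + 2 * x (Fin.last d) * (starRingEnd ℂ) (x (Fin.last d)) ^ 2 * sF d μ N x ^ 3) :=
    eventuallyEq_of_isOpen (Udom_open hΩ hNsm hNpos) hp0
      (fun x hx => T3LLL hΩ hNsm hNpos hx)
  have hds := sF_differentiableAt hΩ hNsm hNpos hp0.1 hp0.2
  have hql : DifferentiableAt ℝ (fun x : Fin (d+1) → ℂ => x (Fin.last d)) p₀ :=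
    differentiableAt_coord _
  have hcl : DifferentiableAt ℝ
      (fun x : Fin (d+1) → ℂ => (starRingEnd ℂ) (x (Fin.last d))) p₀ :=
    differentiableAt_coord_conj _
  have hc2 : DifferentiableAt ℝ (fun x : Fin (d+1) → ℂ => (2:ℂ)) p₀ := differentiableAt_const _
  rw [wDbar_congr hev,
    wDbar_add ((hc2.fun_mul hcl).fun_mul (hds.fun_pow 2)) (((hc2.fun_mul hql).fun_mul (hcl.fun_pow 2)).fun_mul (hds.fun_pow 3)),
    wDbar_mul (hc2.fun_mul hcl) (hds.fun_pow 2),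
    wDbar_mul hc2 hcl, wDbar_const, wDbar_coord_conj, if_pos rfl,
    wDbar_sq hds, wDbar_last_sF hΩ hNsm hNpos hp0.1 hp0.2,
    wDbar_mul ((hc2.fun_mul hql).fun_mul (hcl.fun_pow 2)) (hds.fun_pow 3),
    wDbar_mul (hc2.fun_mul hql) (hcl.fun_pow 2),
    wDbar_mul hc2 hql, wDbar_const, wDbar_coord,
    wDbar_sq hcl, wDbar_coord_conj, if_pos rfl,
    wDbar_cube hds, wDbar_last_sF hΩ hNsm hNpos hp0.1 hp0.2]
  have hlast : p₀ (Fin.last d) = w := Fin.snoc_last _ _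
  rw [hlast, sF_snoc hN0]
  have hA : ((1 - ‖w‖ ^ 2 : ℝ) : ℂ) = 1 - w * (starRingEnd ℂ) w := by
    rw [Complex.mul_conj, Complex.normSq_eq_norm_sq]; push_cast; ring
  have hB : ((2 + 4 * ‖w‖ ^ 2 : ℝ) : ℂ) = 2 + 4 * (w * (starRingEnd ℂ) w) := by
    rw [Complex.mul_conj, Complex.normSq_eq_norm_sq]; push_cast; ring
  rw [hA, hB]
  field_simp [one_sub_mul_conj_ne hw]
  ring

end Eval

noncomputable section Eval2
open Complex

variable {d : ℕ} {μ : ℝ} {N : (Fin d → ℂ) → ℝ} {Ω : Set (Fin d → ℂ)}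

lemma case4a (hΩ : IsOpen Ω) (hNsm : ContDiffOn ℝ (⊤ : ℕ∞) N Ω) (hNpos : ∀ z ∈ Ω, 0 < N z)
    (h0 : (0 : Fin d → ℂ) ∈ Ω) (hN0 : N 0 = 1)
    (hu : ∀ i : Fin d, wD i (NmuC d μ N) 0 = 0)
    {w : ℂ} (hw : ‖w‖ < 1) (j : Fin d) :
    wDbar (Fin.last d) (wD (Fin.last d) (gCH d μ N j.castSucc (Fin.last d)))
        (Fin.snoc (0 : Fin d → ℂ) w) = 0 := by
  have hp0 := snoc_mem_U (μ := μ) hNpos h0 hN0 hw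
  set p₀ : Fin (d+1) → ℂ := Fin.snoc (0 : Fin d → ℂ) w with hp₀
  have hι : iotaC d p₀ = 0 := iota_snoc0
  have hmCι := NmuC_contDiffAt (μ := μ) hΩ hNsm hNpos hp0.1
  have hev : wD (Fin.last d) (gCH d μ N j.castSucc (Fin.last d)) =ᶠ[nhds p₀]
      (fun x => -(wD j (NmuC d μ N) (iotaC d x)) * sF d μ N x ^ 2
        + (-2) * x (Fin.last d) * (starRingEnd ℂ) (x (Fin.last d))
          * wD j (NmuC d μ N) (iotaC d x) * sF d μ N x ^ 3) :=
    eventuallyEq_of_isOpen (Udom_open hΩ hNsm hNpos) hp0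
      (fun x hx => T3LzL hΩ hNsm hNpos hx j)
  have hds := sF_differentiableAt hΩ hNsm hNpos hp0.1 hp0.2
  have hql : DifferentiableAt ℝ (fun x : Fin (d+1) → ℂ => x (Fin.last d)) p₀ :=
    differentiableAt_coord _
  have hcl : DifferentiableAt ℝ
      (fun x : Fin (d+1) → ℂ => (starRingEnd ℂ) (x (Fin.last d))) p₀ :=
    differentiableAt_coord_conj _
  have hcst : DifferentiableAt ℝ (fun x : Fin (d+1) → ℂ => (-2:ℂ)) p₀ :=
    differentiableAt_const _
  have huj : DifferentiableAt ℝ (wD j (NmuC d μ N)) (iotaC d p₀) :=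
    cdiff_differentiableAt (hmCι.wD_smooth j)
  have hujq : DifferentiableAt ℝ (fun x => wD j (NmuC d μ N) (iotaC d x)) p₀ :=
    huj.comp p₀ (iotaC d).differentiableAt
  rw [wDbar_congr hev,
    wDbar_add (hujq.fun_neg.fun_mul (hds.fun_pow 2)) ((((hcst.fun_mul hql).fun_mul hcl).fun_mul hujq).fun_mul (hds.fun_pow 3)),
    wDbar_mul hujq.fun_neg (hds.fun_pow 2), wDbar_neg, wDbar_last_comp_iota _ _ huj,
    wDbar_sq hds, wDbar_last_sF hΩ hNsm hNpos hp0.1 hp0.2,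
    wDbar_mul (((hcst.fun_mul hql).fun_mul hcl).fun_mul hujq) (hds.fun_pow 3),
    wDbar_mul ((hcst.fun_mul hql).fun_mul hcl) hujq,
    wDbar_mul (hcst.fun_mul hql) hcl,
    wDbar_mul hcst hql, wDbar_const, wDbar_coord, wDbar_coord_conj, if_pos rfl,
    wDbar_last_comp_iota _ _ huj,
    wDbar_cube hds, wDbar_last_sF hΩ hNsm hNpos hp0.1 hp0.2,
    hι, hu j]
  ring

lemma case4b (hΩ : IsOpen Ω) (hNsm : ContDiffOn ℝ (⊤ : ℕ∞) N Ω) (hNpos : ∀ z ∈ Ω, 0 < N z)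
    (h0 : (0 : Fin d → ℂ) ∈ Ω) (hN0 : N 0 = 1)
    (ha : ∀ j : Fin d, wDbar j (NmuC d μ N) 0 = 0)
    {w : ℂ} (hw : ‖w‖ < 1) (j : Fin d) :
    wDbar (Fin.last d) (wD (Fin.last d) (gCH d μ N (Fin.last d) j.castSucc))
        (Fin.snoc (0 : Fin d → ℂ) w) = 0 := by
  have hp0 := snoc_mem_U (μ := μ) hNpos h0 hN0 hw
  set p₀ : Fin (d+1) → ℂ := Fin.snoc (0 : Fin d → ℂ) w with hp₀
  have hι : iotaC d p₀ = 0 := iota_snoc0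
  have hmCι := NmuC_contDiffAt (μ := μ) hΩ hNsm hNpos hp0.1
  have hev : wD (Fin.last d) (gCH d μ N (Fin.last d) j.castSucc) =ᶠ[nhds p₀]
      (fun x => (-2) * wDbar j (NmuC d μ N) (iotaC d x)
        * (starRingEnd ℂ) (x (Fin.last d)) ^ 2 * sF d μ N x ^ 3) :=
    eventuallyEq_of_isOpen (Udom_open hΩ hNsm hNpos) hp0
      (fun x hx => T3LLz hΩ hNsm hNpos hx j)
  have hds := sF_differentiableAt hΩ hNsm hNpos hp0.1 hp0.2
  have hcl : DifferentiableAt ℝ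
      (fun x : Fin (d+1) → ℂ => (starRingEnd ℂ) (x (Fin.last d))) p₀ :=
    differentiableAt_coord_conj _
  have hcst : DifferentiableAt ℝ (fun x : Fin (d+1) → ℂ => (-2:ℂ)) p₀ :=
    differentiableAt_const _
  have haj : DifferentiableAt ℝ (wDbar j (NmuC d μ N)) (iotaC d p₀) :=
    cdiff_differentiableAt (hmCι.wDbar_smooth j)
  have hajq : DifferentiableAt ℝ (fun x => wDbar j (NmuC d μ N) (iotaC d x)) p₀ :=
    haj.comp p₀ (iotaC d).differentiableAt
  rw [wDbar_congr hev,
    wDbar_mul ((hcst.fun_mul hajq).fun_mul (hcl.fun_pow 2)) (hds.fun_pow 3),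
    wDbar_mul (hcst.fun_mul hajq) (hcl.fun_pow 2),
    wDbar_mul hcst hajq, wDbar_const,
    wDbar_last_comp_iota _ _ haj,
    wDbar_sq hcl, wDbar_coord_conj, if_pos rfl,
    wDbar_cube hds, wDbar_last_sF hΩ hNsm hNpos hp0.1 hp0.2,
    hι, ha j]
  ring

lemma case3 (hΩ : IsOpen Ω) (hNsm : ContDiffOn ℝ (⊤ : ℕ∞) N Ω) (hNpos : ∀ z ∈ Ω, 0 < N z)
    (h0 : (0 : Fin d → ℂ) ∈ Ω) (hN0 : N 0 = 1)
    (hu : ∀ i : Fin d, wD i (NmuC d μ N) 0 = 0)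
    (ha : ∀ j : Fin d, wDbar j (NmuC d μ N) 0 = 0)
    {w : ℂ} (hw : ‖w‖ < 1) (k l : Fin d) :
    wDbar l.castSucc (wD k.castSucc (gCH d μ N (Fin.last d) (Fin.last d)))
        (Fin.snoc (0 : Fin d → ℂ) w)
      = -((1 + ‖w‖ ^ 2 : ℝ) : ℂ) * wDbar l (wD k (NmuC d μ N)) 0 /
          ((1 - ‖w‖ ^ 2 : ℝ) : ℂ) ^ 3 := by
  have hp0 := snoc_mem_U (μ := μ) hNpos h0 hN0 hw
  set p₀ : Fin (d+1) → ℂ := Fin.snoc (0 : Fin d → ℂ) w with hp₀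
  have hι : iotaC d p₀ = 0 := iota_snoc0
  have hmCι := NmuC_contDiffAt (μ := μ) hΩ hNsm hNpos hp0.1
  have hev : wD k.castSucc (gCH d μ N (Fin.last d) (Fin.last d)) =ᶠ[nhds p₀]
      (fun x => -(wD k (NmuC d μ N) (iotaC d x)) * sF d μ N x ^ 2
        + (-2) * x (Fin.last d) * (starRingEnd ℂ) (x (Fin.last d))
          * wD k (NmuC d μ N) (iotaC d x) * sF d μ N x ^ 3) :=
    eventuallyEq_of_isOpen (Udom_open hΩ hNsm hNpos) hp0
      (fun x hx => T3kLL hΩ hNsm hNpos hx k)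
  have hds := sF_differentiableAt hΩ hNsm hNpos hp0.1 hp0.2
  have hql : DifferentiableAt ℝ (fun x : Fin (d+1) → ℂ => x (Fin.last d)) p₀ :=
    differentiableAt_coord _
  have hcl : DifferentiableAt ℝ
      (fun x : Fin (d+1) → ℂ => (starRingEnd ℂ) (x (Fin.last d))) p₀ :=
    differentiableAt_coord_conj _
  have hcst : DifferentiableAt ℝ (fun x : Fin (d+1) → ℂ => (-2:ℂ)) p₀ :=
    differentiableAt_const _
  have huk : DifferentiableAt ℝ (wD k (NmuC d μ N)) (iotaC d p₀) :=
    cdiff_differentiableAt (hmCι.wD_smooth k)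
  have hukq : DifferentiableAt ℝ (fun x => wD k (NmuC d μ N) (iotaC d x)) p₀ :=
    huk.comp p₀ (iotaC d).differentiableAt
  rw [wDbar_congr hev,
    wDbar_add (hukq.fun_neg.fun_mul (hds.fun_pow 2)) ((((hcst.fun_mul hql).fun_mul hcl).fun_mul hukq).fun_mul (hds.fun_pow 3)),
    wDbar_mul hukq.fun_neg (hds.fun_pow 2), wDbar_neg, wDbar_comp_iota _ _ huk,
    wDbar_sq hds, wDbar_cs_sF hΩ hNsm hNpos hp0.1 hp0.2,
    wDbar_mul (((hcst.fun_mul hql).fun_mul hcl).fun_mul hukq) (hds.fun_pow 3),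
    wDbar_mul ((hcst.fun_mul hql).fun_mul hcl) hukq,
    wDbar_mul (hcst.fun_mul hql) hcl,
    wDbar_mul hcst hql, wDbar_const, wDbar_coord,
    wDbar_coord_conj, if_neg (Fin.castSucc_lt_last l).ne',
    wDbar_comp_iota _ _ huk,
    wDbar_cube hds, wDbar_cs_sF hΩ hNsm hNpos hp0.1 hp0.2,
    hι, hu k, ha l]
  have hlast : p₀ (Fin.last d) = w := Fin.snoc_last _ _
  rw [hlast, sF_snoc hN0]
  have hA : ((1 - ‖w‖ ^ 2 : ℝ) : ℂ) = 1 - w * (starRingEnd ℂ) w := by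
    rw [Complex.mul_conj, Complex.normSq_eq_norm_sq]; push_cast; ring
  have hB : ((1 + ‖w‖ ^ 2 : ℝ) : ℂ) = 1 + w * (starRingEnd ℂ) w := by
    rw [Complex.mul_conj, Complex.normSq_eq_norm_sq]; push_cast; ring
  rw [hA, hB]
  field_simp [one_sub_mul_conj_ne hw]
  ring

end Eval2

noncomputable section Eval3
open Complex

variable {d : ℕ} {μ : ℝ} {N : (Fin d → ℂ) → ℝ} {Ω : Set (Fin d → ℂ)}

lemma case2 (hΩ : IsOpen Ω) (hNsm : ContDiffOn ℝ (⊤ : ℕ∞) N Ω) (hNpos : ∀ z ∈ Ω, 0 < N z)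
    (h0 : (0 : Fin d → ℂ) ∈ Ω) (hN0 : N 0 = 1)
    (hu : ∀ i : Fin d, wD i (NmuC d μ N) 0 = 0)
    (ha : ∀ j : Fin d, wDbar j (NmuC d μ N) 0 = 0)
    {w : ℂ} (hw : ‖w‖ < 1) (j k l : Fin d) :
    wDbar l.castSucc (wD k.castSucc (gCH d μ N (Fin.last d) j.castSucc))
        (Fin.snoc (0 : Fin d → ℂ) w)
      = -(starRingEnd ℂ) w * wDbar j (wDbar l (wD k (NmuC d μ N))) 0 /
          ((1 - ‖w‖ ^ 2 : ℝ) : ℂ) ^ 2 := by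
  have hp0 := snoc_mem_U (μ := μ) hNpos h0 hN0 hw
  set p₀ : Fin (d+1) → ℂ := Fin.snoc (0 : Fin d → ℂ) w with hp₀
  have hι : iotaC d p₀ = 0 := iota_snoc0
  have hmCι := NmuC_contDiffAt (μ := μ) hΩ hNsm hNpos hp0.1
  have hev : wD k.castSucc (gCH d μ N (Fin.last d) j.castSucc) =ᶠ[nhds p₀]
      (fun x => -(wD k (wDbar j (NmuC d μ N)) (iotaC d x))
          * (starRingEnd ℂ) (x (Fin.last d)) * sF d μ N x ^ 2
        + 2 * wDbar j (NmuC d μ N) (iotaC d x) * wD k (NmuC d μ N) (iotaC d x)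
          * (starRingEnd ℂ) (x (Fin.last d)) * sF d μ N x ^ 3) :=
    eventuallyEq_of_isOpen (Udom_open hΩ hNsm hNpos) hp0
      (fun x hx => T3Lz hΩ hNsm hNpos hx j k)
  have hds := sF_differentiableAt hΩ hNsm hNpos hp0.1 hp0.2
  have hcl : DifferentiableAt ℝ
      (fun x : Fin (d+1) → ℂ => (starRingEnd ℂ) (x (Fin.last d))) p₀ :=
    differentiableAt_coord_conj _
  have hcst : DifferentiableAt ℝ (fun x : Fin (d+1) → ℂ => (2:ℂ)) p₀ :=
    differentiableAt_const _
  have hiota := (iotaC d).differentiableAt (x := p₀)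
  have haj : DifferentiableAt ℝ (wDbar j (NmuC d μ N)) (iotaC d p₀) :=
    cdiff_differentiableAt (hmCι.wDbar_smooth j)
  have hajq : DifferentiableAt ℝ (fun x => wDbar j (NmuC d μ N) (iotaC d x)) p₀ :=
    haj.comp p₀ hiota
  have hbkj : DifferentiableAt ℝ (wD k (wDbar j (NmuC d μ N))) (iotaC d p₀) :=
    cdiff_differentiableAt ((hmCι.wDbar_smooth j).wD_smooth k)
  have hbkjq : DifferentiableAt ℝ (fun x => wD k (wDbar j (NmuC d μ N)) (iotaC d x)) p₀ :=
    hbkj.comp p₀ hiota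
  have huk : DifferentiableAt ℝ (wD k (NmuC d μ N)) (iotaC d p₀) :=
    cdiff_differentiableAt (hmCι.wD_smooth k)
  have hukq : DifferentiableAt ℝ (fun x => wD k (NmuC d μ N) (iotaC d x)) p₀ :=
    huk.comp p₀ hiota
  rw [wDbar_congr hev,
    wDbar_add ((hbkjq.fun_neg.fun_mul hcl).fun_mul (hds.fun_pow 2))
      ((((hcst.fun_mul hajq).fun_mul hukq).fun_mul hcl).fun_mul (hds.fun_pow 3)),
    wDbar_mul (hbkjq.fun_neg.fun_mul hcl) (hds.fun_pow 2),
    wDbar_mul hbkjq.fun_neg hcl, wDbar_neg, wDbar_comp_iota _ _ hbkj,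
    wDbar_coord_conj, if_neg (Fin.castSucc_lt_last l).ne',
    wDbar_sq hds, wDbar_cs_sF hΩ hNsm hNpos hp0.1 hp0.2,
    wDbar_mul (((hcst.fun_mul hajq).fun_mul hukq).fun_mul hcl) (hds.fun_pow 3),
    wDbar_mul ((hcst.fun_mul hajq).fun_mul hukq) hcl,
    wDbar_mul (hcst.fun_mul hajq) hukq,
    wDbar_mul hcst hajq, wDbar_const,
    wDbar_comp_iota _ _ haj, wDbar_comp_iota _ _ huk,
    wDbar_cube hds, wDbar_cs_sF hΩ hNsm hNpos hp0.1 hp0.2,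
    hι, hu k, ha j, ha l]
  -- commutation: wDbar l (wD k (wDbar j m)) 0 = wDbar j (wDbar l (wD k m)) 0
  have hmC0 := NmuC_contDiffAt (μ := μ) hΩ hNsm hNpos h0
  have hswap : wDbar l (wD k (wDbar j (NmuC d μ N))) 0
      = wDbar j (wDbar l (wD k (NmuC d μ N))) 0 := by
    have hev2 : wD k (wDbar j (NmuC d μ N)) =ᶠ[nhds (0 : Fin d → ℂ)]
        wDbar j (wD k (NmuC d μ N)) :=
      eventuallyEq_of_isOpen hΩ h0
        (fun z hz => wD_wDbar_comm (NmuC_contDiffAt hΩ hNsm hNpos hz) k j)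
    rw [wDbar_congr hev2 l, wDbar_wDbar_comm (hmC0.wD_smooth k) l j]
  rw [hswap]
  have hlast : p₀ (Fin.last d) = w := Fin.snoc_last _ _
  rw [hlast, sF_snoc hN0]
  have hA : ((1 - ‖w‖ ^ 2 : ℝ) : ℂ) = 1 - w * (starRingEnd ℂ) w := by
    rw [Complex.mul_conj, Complex.normSq_eq_norm_sq]; push_cast; ring
  rw [hA]
  have hne := one_sub_mul_conj_ne hw
  have h1 : (1 - w * (starRingEnd ℂ) w) * (1 - w * (starRingEnd ℂ) w)⁻¹ = 1 := mul_inv_cancel₀ hne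
  simp only [div_eq_mul_inv, ← inv_pow] at h1 ⊢
  generalize (1 - w * (starRingEnd ℂ) w)⁻¹ = u at h1 ⊢
  ring

end Eval3

noncomputable section Eval4
open Complex

variable {d : ℕ} {μ : ℝ} {N : (Fin d → ℂ) → ℝ} {Ω : Set (Fin d → ℂ)}

lemma NmuC_at_zero (hN0 : N 0 = 1) : NmuC d μ N 0 = 1 := by
  simp [NmuC, hN0, Real.one_rpow]

lemma rF_at_zero (hN0 : N 0 = 1) : rF d μ N 0 = 1 := by
  simp [rF, NmuC_at_zero hN0]

/-- the gOm fourth derivative at 0 -/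
lemma case1rhs (hΩ : IsOpen Ω) (hNsm : ContDiffOn ℝ (⊤ : ℕ∞) N Ω) (hNpos : ∀ z ∈ Ω, 0 < N z)
    (h0 : (0 : Fin d → ℂ) ∈ Ω) (hN0 : N 0 = 1)
    (hu : ∀ i : Fin d, wD i (NmuC d μ N) 0 = 0)
    (ha : ∀ j : Fin d, wDbar j (NmuC d μ N) 0 = 0)
    (hv : ∀ k i : Fin d, wD k (wD i (NmuC d μ N)) 0 = 0)
    (i j k l : Fin d) :
    wDbar l (wD k (gOm d μ N i j)) 0
      = -(wDbar l (wD k (wD i (wDbar j (NmuC d μ N)))) 0)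
        + wD i (wDbar j (NmuC d μ N)) 0 * wDbar l (wD k (NmuC d μ N)) 0
        + wD k (wDbar j (NmuC d μ N)) 0 * wDbar l (wD i (NmuC d μ N)) 0 := by
  have hmC0 := NmuC_contDiffAt (μ := μ) hΩ hNsm hNpos h0
  have hev : wD k (gOm d μ N i j) =ᶠ[nhds (0 : Fin d → ℂ)]
      (fun x => -(wD k (wD i (wDbar j (NmuC d μ N))) x) * rF d μ N x
        + wD i (wDbar j (NmuC d μ N)) x * wD k (NmuC d μ N) x * rF d μ N x ^ 2
        + wD k (wDbar j (NmuC d μ N)) x * wD i (NmuC d μ N) x * rF d μ N x ^ 2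
        + wDbar j (NmuC d μ N) x * wD k (wD i (NmuC d μ N)) x * rF d μ N x ^ 2
        + (-2) * wDbar j (NmuC d μ N) x * wD i (NmuC d μ N) x * wD k (NmuC d μ N) x
          * rF d μ N x ^ 3) :=
    eventuallyEq_of_isOpen hΩ h0 (fun z hz => T3om hΩ hNsm hNpos hz i j k)
  have haj : DifferentiableAt ℝ (wDbar j (NmuC d μ N)) 0 :=
    cdiff_differentiableAt (hmC0.wDbar_smooth j)
  have hbij : DifferentiableAt ℝ (wD i (wDbar j (NmuC d μ N))) 0 :=
    cdiff_differentiableAt ((hmC0.wDbar_smooth j).wD_smooth i)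
  have hbkj : DifferentiableAt ℝ (wD k (wDbar j (NmuC d μ N))) 0 :=
    cdiff_differentiableAt ((hmC0.wDbar_smooth j).wD_smooth k)
  have hcc : DifferentiableAt ℝ (wD k (wD i (wDbar j (NmuC d μ N)))) 0 :=
    cdiff_differentiableAt (((hmC0.wDbar_smooth j).wD_smooth i).wD_smooth k)
  have hui : DifferentiableAt ℝ (wD i (NmuC d μ N)) 0 :=
    cdiff_differentiableAt (hmC0.wD_smooth i)
  have huk : DifferentiableAt ℝ (wD k (NmuC d μ N)) 0 :=
    cdiff_differentiableAt (hmC0.wD_smooth k)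
  have hvv : DifferentiableAt ℝ (wD k (wD i (NmuC d μ N))) 0 :=
    cdiff_differentiableAt ((hmC0.wD_smooth i).wD_smooth k)
  have hcst : DifferentiableAt ℝ (fun x : Fin d → ℂ => (-2:ℂ)) 0 := differentiableAt_const _
  have hdr := rF_differentiableAt (μ := μ) hΩ hNsm hNpos h0
  rw [wDbar_congr hev,
    wDbar_add (((((hcc.fun_neg.fun_mul hdr).fun_add ((hbij.fun_mul huk).fun_mul (hdr.fun_pow 2))).fun_add
        ((hbkj.fun_mul hui).fun_mul (hdr.fun_pow 2))).fun_add ((haj.fun_mul hvv).fun_mul (hdr.fun_pow 2))))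
      ((((hcst.fun_mul haj).fun_mul hui).fun_mul huk).fun_mul (hdr.fun_pow 3)),
    wDbar_add ((((hcc.fun_neg.fun_mul hdr).fun_add ((hbij.fun_mul huk).fun_mul (hdr.fun_pow 2))).fun_add
        ((hbkj.fun_mul hui).fun_mul (hdr.fun_pow 2)))) ((haj.fun_mul hvv).fun_mul (hdr.fun_pow 2)),
    wDbar_add (((hcc.fun_neg.fun_mul hdr).fun_add ((hbij.fun_mul huk).fun_mul (hdr.fun_pow 2))))
      ((hbkj.fun_mul hui).fun_mul (hdr.fun_pow 2)),
    wDbar_add (hcc.fun_neg.fun_mul hdr) ((hbij.fun_mul huk).fun_mul (hdr.fun_pow 2)),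
    wDbar_mul hcc.fun_neg hdr, wDbar_neg,
    wDbar_rF hΩ hNsm hNpos h0,
    wDbar_mul (hbij.fun_mul huk) (hdr.fun_pow 2),
    wDbar_mul hbij huk,
    wDbar_sq hdr, wDbar_rF hΩ hNsm hNpos h0,
    wDbar_mul (hbkj.fun_mul hui) (hdr.fun_pow 2),
    wDbar_mul hbkj hui,
    wDbar_mul (haj.fun_mul hvv) (hdr.fun_pow 2),
    wDbar_mul haj hvv,
    wDbar_mul (((hcst.fun_mul haj).fun_mul hui).fun_mul huk) (hdr.fun_pow 3),
    wDbar_mul ((hcst.fun_mul haj).fun_mul hui) huk,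
    wDbar_mul (hcst.fun_mul haj) hui,
    wDbar_mul hcst haj, wDbar_const,
    wDbar_cube hdr,
    hu i, hu k, ha j, ha l, hv k i, rF_at_zero hN0]
  ring

lemma case1 (hΩ : IsOpen Ω) (hNsm : ContDiffOn ℝ (⊤ : ℕ∞) N Ω) (hNpos : ∀ z ∈ Ω, 0 < N z)
    (h0 : (0 : Fin d → ℂ) ∈ Ω) (hN0 : N 0 = 1)
    (hu : ∀ i : Fin d, wD i (NmuC d μ N) 0 = 0)
    (ha : ∀ j : Fin d, wDbar j (NmuC d μ N) 0 = 0)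
    (hv : ∀ k i : Fin d, wD k (wD i (NmuC d μ N)) 0 = 0)
    {w : ℂ} (hw : ‖w‖ < 1) (i j k l : Fin d) :
    wDbar l.castSucc (wD k.castSucc (gCH d μ N i.castSucc j.castSucc))
        (Fin.snoc (0 : Fin d → ℂ) w)
      = wDbar l (wD k (gOm d μ N i j)) 0 / ((1 - ‖w‖ ^ 2 : ℝ) : ℂ) +
          ((‖w‖ ^ 2 : ℝ) : ℂ) *
            (wDbar l (wD i (NmuC d μ N)) 0 * wDbar j (wD k (NmuC d μ N)) 0 +
              wDbar j (wD i (NmuC d μ N)) 0 * wDbar l (wD k (NmuC d μ N)) 0) /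
            ((1 - ‖w‖ ^ 2 : ℝ) : ℂ) ^ 2 := by
  have hp0 := snoc_mem_U (μ := μ) hNpos h0 hN0 hw
  set p₀ : Fin (d+1) → ℂ := Fin.snoc (0 : Fin d → ℂ) w with hp₀
  have hι : iotaC d p₀ = 0 := iota_snoc0
  have hmCι := NmuC_contDiffAt (μ := μ) hΩ hNsm hNpos hp0.1
  have hmC0 := NmuC_contDiffAt (μ := μ) hΩ hNsm hNpos h0
  have hev : wD k.castSucc (gCH d μ N i.castSucc j.castSucc) =ᶠ[nhds p₀]
      (fun x => -(wD k (wD i (wDbar j (NmuC d μ N))) (iotaC d x)) * sF d μ N x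
        + wD i (wDbar j (NmuC d μ N)) (iotaC d x) * wD k (NmuC d μ N) (iotaC d x)
            * sF d μ N x ^ 2
        + wD k (wDbar j (NmuC d μ N)) (iotaC d x) * wD i (NmuC d μ N) (iotaC d x)
            * sF d μ N x ^ 2
        + wDbar j (NmuC d μ N) (iotaC d x) * wD k (wD i (NmuC d μ N)) (iotaC d x)
            * sF d μ N x ^ 2
        + (-2) * wDbar j (NmuC d μ N) (iotaC d x) * wD i (NmuC d μ N) (iotaC d x)
            * wD k (NmuC d μ N) (iotaC d x) * sF d μ N x ^ 3) :=
    eventuallyEq_of_isOpen (Udom_open hΩ hNsm hNpos) hp0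
      (fun x hx => T3zz hΩ hNsm hNpos hx i j k)
  have hiota := (iotaC d).differentiableAt (x := p₀)
  have haj : DifferentiableAt ℝ (wDbar j (NmuC d μ N)) (iotaC d p₀) :=
    cdiff_differentiableAt (hmCι.wDbar_smooth j)
  have hajq : DifferentiableAt ℝ (fun x => wDbar j (NmuC d μ N) (iotaC d x)) p₀ :=
    haj.comp p₀ hiota
  have hbij : DifferentiableAt ℝ (wD i (wDbar j (NmuC d μ N))) (iotaC d p₀) :=
    cdiff_differentiableAt ((hmCι.wDbar_smooth j).wD_smooth i)
  have hbijq : DifferentiableAt ℝ (fun x => wD i (wDbar j (NmuC d μ N)) (iotaC d x)) p₀ :=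
    hbij.comp p₀ hiota
  have hbkj : DifferentiableAt ℝ (wD k (wDbar j (NmuC d μ N))) (iotaC d p₀) :=
    cdiff_differentiableAt ((hmCι.wDbar_smooth j).wD_smooth k)
  have hbkjq : DifferentiableAt ℝ (fun x => wD k (wDbar j (NmuC d μ N)) (iotaC d x)) p₀ :=
    hbkj.comp p₀ hiota
  have hcc : DifferentiableAt ℝ (wD k (wD i (wDbar j (NmuC d μ N)))) (iotaC d p₀) :=
    cdiff_differentiableAt (((hmCι.wDbar_smooth j).wD_smooth i).wD_smooth k)
  have hccq : DifferentiableAt ℝ (fun x => wD k (wD i (wDbar j (NmuC d μ N))) (iotaC d x)) p₀ :=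
    hcc.comp p₀ hiota
  have hui : DifferentiableAt ℝ (wD i (NmuC d μ N)) (iotaC d p₀) :=
    cdiff_differentiableAt (hmCι.wD_smooth i)
  have huiq : DifferentiableAt ℝ (fun x => wD i (NmuC d μ N) (iotaC d x)) p₀ :=
    hui.comp p₀ hiota
  have huk : DifferentiableAt ℝ (wD k (NmuC d μ N)) (iotaC d p₀) :=
    cdiff_differentiableAt (hmCι.wD_smooth k)
  have hukq : DifferentiableAt ℝ (fun x => wD k (NmuC d μ N) (iotaC d x)) p₀ :=
    huk.comp p₀ hiota
  have hvv : DifferentiableAt ℝ (wD k (wD i (NmuC d μ N))) (iotaC d p₀) :=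
    cdiff_differentiableAt ((hmCι.wD_smooth i).wD_smooth k)
  have hvvq : DifferentiableAt ℝ (fun x => wD k (wD i (NmuC d μ N)) (iotaC d x)) p₀ :=
    hvv.comp p₀ hiota
  have hcst : DifferentiableAt ℝ (fun x : Fin (d+1) → ℂ => (-2:ℂ)) p₀ :=
    differentiableAt_const _
  have hds := sF_differentiableAt hΩ hNsm hNpos hp0.1 hp0.2
  rw [wDbar_congr hev,
    wDbar_add (((((hccq.fun_neg.fun_mul hds).fun_add ((hbijq.fun_mul hukq).fun_mul (hds.fun_pow 2))).fun_add
        ((hbkjq.fun_mul huiq).fun_mul (hds.fun_pow 2))).fun_add ((hajq.fun_mul hvvq).fun_mul (hds.fun_pow 2))))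
      ((((hcst.fun_mul hajq).fun_mul huiq).fun_mul hukq).fun_mul (hds.fun_pow 3)),
    wDbar_add ((((hccq.fun_neg.fun_mul hds).fun_add ((hbijq.fun_mul hukq).fun_mul (hds.fun_pow 2))).fun_add
        ((hbkjq.fun_mul huiq).fun_mul (hds.fun_pow 2)))) ((hajq.fun_mul hvvq).fun_mul (hds.fun_pow 2)),
    wDbar_add (((hccq.fun_neg.fun_mul hds).fun_add ((hbijq.fun_mul hukq).fun_mul (hds.fun_pow 2))))
      ((hbkjq.fun_mul huiq).fun_mul (hds.fun_pow 2)),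
    wDbar_add (hccq.fun_neg.fun_mul hds) ((hbijq.fun_mul hukq).fun_mul (hds.fun_pow 2)),
    wDbar_mul hccq.fun_neg hds, wDbar_neg, wDbar_comp_iota _ _ hcc,
    wDbar_cs_sF hΩ hNsm hNpos hp0.1 hp0.2,
    wDbar_mul (hbijq.fun_mul hukq) (hds.fun_pow 2),
    wDbar_mul hbijq hukq, wDbar_comp_iota _ _ hbij, wDbar_comp_iota _ _ huk,
    wDbar_sq hds, wDbar_cs_sF hΩ hNsm hNpos hp0.1 hp0.2,
    wDbar_mul (hbkjq.fun_mul huiq) (hds.fun_pow 2),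
    wDbar_mul hbkjq huiq, wDbar_comp_iota _ _ hbkj, wDbar_comp_iota _ _ hui,
    wDbar_mul (hajq.fun_mul hvvq) (hds.fun_pow 2),
    wDbar_mul hajq hvvq, wDbar_comp_iota _ _ haj, wDbar_comp_iota _ _ hvv,
    wDbar_mul (((hcst.fun_mul hajq).fun_mul huiq).fun_mul hukq) (hds.fun_pow 3),
    wDbar_mul ((hcst.fun_mul hajq).fun_mul huiq) hukq,
    wDbar_mul (hcst.fun_mul hajq) huiq,
    wDbar_mul hcst hajq, wDbar_const,
    wDbar_cube hds,
    hι, hu i, hu k, ha j, ha l, hv k i]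
  rw [case1rhs hΩ hNsm hNpos h0 hN0 hu ha hv i j k l]
  -- commutations for the product terms
  have hc1 : wDbar j (wD i (NmuC d μ N)) 0 = wD i (wDbar j (NmuC d μ N)) 0 :=
    (wD_wDbar_comm hmC0 i j).symm
  have hc2 : wDbar j (wD k (NmuC d μ N)) 0 = wD k (wDbar j (NmuC d μ N)) 0 :=
    (wD_wDbar_comm hmC0 k j).symm
  rw [hc1, hc2, sF_snoc hN0]
  have hA : ((1 - ‖w‖ ^ 2 : ℝ) : ℂ) = 1 - w * (starRingEnd ℂ) w := by
    rw [Complex.mul_conj, Complex.normSq_eq_norm_sq]; push_cast; ring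
  have hB : ((‖w‖ ^ 2 : ℝ) : ℂ) = w * (starRingEnd ℂ) w := by
    rw [Complex.mul_conj, Complex.normSq_eq_norm_sq]
  rw [hA, hB]
  field_simp [one_sub_mul_conj_ne hw]
  ring

end Eval4

/-- fourth-order derivatives of the potential at points (0,w). -/
theorem gCH_fourth_derivatives_at_zero (d : ℕ) (hd : 1 ≤ d) (γ μ : ℝ) (hγ : 0 < γ) (hμ : 0 < μ)
    (Ω : Set (Fin d → ℂ)) (hΩopen : IsOpen Ω) (hΩconn : IsPreconnected Ω)
    (N : (Fin d → ℂ) → ℝ) (hNsm : ContDiffOn ℝ (⊤ : ℕ∞) N Ω) (hNpos : ∀ z ∈ Ω, 0 < N z)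
    (h0 : (0 : Fin d → ℂ) ∈ Ω) (hN0 : N 0 = 1)
    (hHol : ∀ L : List (Fin d), L ≠ [] → L.foldr (fun j f => wD j f) (NmuC d μ N) 0 = 0)
    (hAhol : ∀ L : List (Fin d), L ≠ [] → L.foldr (fun j f => wDbar j f) (NmuC d μ N) 0 = 0)
    (w : ℂ) (hw : ‖w‖ < 1) :
    (∀ i j k l : Fin d,
      wDbar l.castSucc (wD k.castSucc (gCH d μ N i.castSucc j.castSucc))
          (Fin.snoc (0 : Fin d → ℂ) w) =
        wDbar l (wD k (gOm d μ N i j)) 0 / ((1 - ‖w‖ ^ 2 : ℝ) : ℂ) +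
          ((‖w‖ ^ 2 : ℝ) : ℂ) *
            (wDbar l (wD i (NmuC d μ N)) 0 * wDbar j (wD k (NmuC d μ N)) 0 +
              wDbar j (wD i (NmuC d μ N)) 0 * wDbar l (wD k (NmuC d μ N)) 0) /
            ((1 - ‖w‖ ^ 2 : ℝ) : ℂ) ^ 2) ∧
    (∀ j k l : Fin d,
      wDbar l.castSucc (wD k.castSucc (gCH d μ N (Fin.last d) j.castSucc))
          (Fin.snoc (0 : Fin d → ℂ) w) =
        -(starRingEnd ℂ) w * wDbar j (wDbar l (wD k (NmuC d μ N))) 0 /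
          ((1 - ‖w‖ ^ 2 : ℝ) : ℂ) ^ 2) ∧
    (∀ k l : Fin d,
      wDbar l.castSucc (wD k.castSucc (gCH d μ N (Fin.last d) (Fin.last d)))
          (Fin.snoc (0 : Fin d → ℂ) w) =
        -((1 + ‖w‖ ^ 2 : ℝ) : ℂ) * wDbar l (wD k (NmuC d μ N)) 0 /
          ((1 - ‖w‖ ^ 2 : ℝ) : ℂ) ^ 3) ∧
    (∀ j : Fin d,
      wDbar (Fin.last d) (wD (Fin.last d) (gCH d μ N j.castSucc (Fin.last d)))
          (Fin.snoc (0 : Fin d → ℂ) w) = 0 ∧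
      wDbar (Fin.last d) (wD (Fin.last d) (gCH d μ N (Fin.last d) j.castSucc))
          (Fin.snoc (0 : Fin d → ℂ) w) = 0) ∧
    (wDbar (Fin.last d) (wD (Fin.last d) (gCH d μ N (Fin.last d) (Fin.last d)))
        (Fin.snoc (0 : Fin d → ℂ) w) =
      ((2 + 4 * ‖w‖ ^ 2 : ℝ) : ℂ) / ((1 - ‖w‖ ^ 2 : ℝ) : ℂ) ^ 4) := by
  have hu : ∀ i : Fin d, wD i (NmuC d μ N) 0 = 0 := fun i => hHol [i] (by simp)
  have ha : ∀ j : Fin d, wDbar j (NmuC d μ N) 0 = 0 := fun j => hAhol [j] (by simp)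
  have hv : ∀ k i : Fin d, wD k (wD i (NmuC d μ N)) 0 = 0 := fun k i => hHol [k, i] (by simp)
  exact ⟨fun i j k l => case1 hΩopen hNsm hNpos h0 hN0 hu ha hv hw i j k l,
    fun j k l => case2 hΩopen hNsm hNpos h0 hN0 hu ha hw j k l,
    fun k l => case3 hΩopen hNsm hNpos h0 hN0 hu ha hw k l,
    fun j => ⟨case4a hΩopen hNsm hNpos h0 hN0 hu hw j,
      case4b hΩopen hNsm hNpos h0 hN0 ha hw j⟩,
    case5 hΩopen hNsm hNpos h0 hN0 hw⟩
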